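/- arXiv:1011.6520 — 6 statements merged into one kernel-verified Lean document; each statement's English description precedes it below -/
import Mathlib

section
/- Let (X,r) be a finite quantum binomial set and let O ⊆ X³ be a square-free D-orbit, i.e. a D-orbit satisfying O ∩ ((Δ₂ × X) ∪ (X × Δ₂)) = ∅. Then the cardinality of O is at least 6. -/
/-- The map r¹² = r × id acting on X³ (realized as `X × X × X`). -/
def r12 {X : Type*} (r : X × X → X × X) : X × X × X → X × X × X :=
  fun p => ((r (p.1, p.2.1)).1, (r (p.1, p.2.1)).2, p.2.2)

/-- The map r²³ = id × r acting on X³. -/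
def r23 {X : Type*} (r : X × X → X × X) : X × X × X → X × X × X :=
  fun p => (p.1, (r (p.2.1, p.2.2)).1, (r (p.2.1, p.2.2)).2)

/-- One step of the action of the group D(r) generated by r¹² and r²³. -/
def dStep {X : Type*} (r : X × X → X × X) (a b : X × X × X) : Prop :=
  r12 r a = b ∨ r23 r a = b

/-- `O` is an orbit of the group D(r) = ⟨r¹², r²³⟩ acting on X³. -/
def IsDOrbit {X : Type*} (r : X × X → X × X) (O : Set (X × X × X)) : Prop :=
  ∃ a, O = {b | Relation.EqvGen (dStep r) a b}

/-- `(X,r)` is a quantum binomial set: `r` is involutive, nondegenerate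
(left and right actions are bijective) and square-free. -/
def IsQuantumBinomial {X : Type*} (r : X × X → X × X) : Prop :=
  Function.Involutive r ∧
  (∀ x : X, Function.Bijective (fun y => (r (x, y)).1)) ∧
  (∀ x : X, Function.Bijective (fun y => (r (y, x)).2)) ∧
  (∀ x : X, r (x, x) = (x, x))

/-- The subset Δ₂ × X of X³. -/
def Diag2X {X : Type*} : Set (X × X × X) := {p | p.1 = p.2.1}

/-- The subset X × Δ₂ of X³. -/
def XDiag2 {X : Type*} : Set (X × X × X) := {p | p.2.1 = p.2.2}

/-- The diagonal Δ₃ of X³. -/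
def Diag3 {X : Type*} : Set (X × X × X) := {p | p.1 = p.2.1 ∧ p.2.1 = p.2.2}

/-- `(X,r)` is braided: the braid relation r¹²r²³r¹² = r²³r¹²r²³ holds on X³. -/
def IsBraided {X : Type*} (r : X × X → X × X) : Prop :=
  (r12 r) ∘ (r23 r) ∘ (r12 r) = (r23 r) ∘ (r12 r) ∘ (r23 r)

/-- A square-free D-orbit of a finite quantum binomial set has at least 6 elements. -/
theorem squarefree_orbit_card_ge_six {X : Type*} [Fintype X]
    (r : X × X → X × X) (hqb : IsQuantumBinomial r)
    (O : Set (X × X × X)) (hO : IsDOrbit r O)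
    (hsf : O ∩ (Diag2X ∪ XDiag2) = ∅) :
    6 ≤ O.ncard := by
  classical
  obtain ⟨hinv, hl, hr, hsq⟩ := hqb
  -- fixed-point lemmas
  have hfix1 : ∀ u v : X, (r (u, v)).1 = u → v = u := by
    intro u v h
    apply (hl u).1
    show (r (u, v)).1 = (r (u, u)).1
    rw [hsq]; exact h
  have hfix2 : ∀ u v : X, (r (u, v)).2 = v → u = v := by
    intro u v h
    apply (hr v).1
    show (r (u, v)).2 = (r (v, v)).2
    rw [hsq]; exact h
  -- involutivity of r12, r23
  have hi12 : ∀ p : X × X × X, r12 r (r12 r p) = p := by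
    rintro ⟨u, v, w⟩
    simp only [r12]
    rw [show ((r (u, v)).1, (r (u, v)).2) = r (u, v) from rfl, hinv (u, v)]
  have hi23 : ∀ p : X × X × X, r23 r (r23 r p) = p := by
    rintro ⟨u, v, w⟩
    simp only [r23]
    rw [show ((r (v, w)).1, (r (v, w)).2) = r (v, w) from rfl, hinv (v, w)]
  obtain ⟨a, rfl⟩ := hO
  set O : Set (X × X × X) := {b | Relation.EqvGen (dStep r) a b} with hOdef
  have hoff : ∀ p ∈ O, p.1 ≠ p.2.1 ∧ p.2.1 ≠ p.2.2 := by
    intro p hp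
    constructor <;> intro h
    · have : p ∈ O ∩ (Diag2X ∪ XDiag2) := ⟨hp, Or.inl h⟩
      rw [hsf] at this; exact this
    · have : p ∈ O ∩ (Diag2X ∪ XDiag2) := ⟨hp, Or.inr h⟩
      rw [hsf] at this; exact this
  obtain ⟨x, y, z⟩ := a
  set a : X × X × X := (x, y, z) with hadef
  set b : X × X × X := r12 r a with hbdef
  set c : X × X × X := r23 r a with hcdef
  set d : X × X × X := r23 r b with hddef
  set e : X × X × X := r12 r c with hedef
  set f : X × X × X := r12 r d with hfdef
  have ha : a ∈ O := Relation.EqvGen.refl a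
  have hb : b ∈ O := Relation.EqvGen.rel a b (Or.inl rfl)
  have hc : c ∈ O := Relation.EqvGen.rel a c (Or.inr rfl)
  have hd : d ∈ O := Relation.EqvGen.trans a b d hb (Relation.EqvGen.rel b d (Or.inr rfl))
  have he : e ∈ O := Relation.EqvGen.trans a c e hc (Relation.EqvGen.rel c e (Or.inl rfl))
  have hf : f ∈ O := Relation.EqvGen.trans a d f hd (Relation.EqvGen.rel d f (Or.inl rfl))
  have hxy : x ≠ y := (hoff a ha).1
  have hyz : y ≠ z := (hoff a ha).2
  -- distinctness
  have hab : a ≠ b := by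
    intro h
    have h1 : x = (r (x, y)).1 := congrArg (fun p => p.1) h
    exact hxy (hfix1 x y h1.symm).symm
  have hac : a ≠ c := by
    intro h
    have h1 : y = (r (y, z)).1 := congrArg (fun p => p.2.1) h
    exact hyz (hfix1 y z h1.symm).symm
  have hbc : b ≠ c := by
    intro h
    have h1 : z = (r (y, z)).2 := congrArg (fun p => p.2.2) h
    exact hyz (hfix2 y z h1.symm)
  have had : a ≠ d := by
    intro h
    have : c = b := by
      calc c = r23 r a := rfl
      _ = r23 r d := by rw [h]
      _ = b := by rw [hddef, hi23]
    exact hbc this.symm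
  have hbd : b ≠ d := by
    intro h
    have h1 : b.2.2 = (r (b.2.1, b.2.2)).2 := congrArg (fun p => p.2.2) h
    exact (hoff b hb).2 (hfix2 b.2.1 b.2.2 h1.symm)
  have hcd : c ≠ d := by
    intro h
    have : a = b := by
      calc a = r23 r c := by rw [hcdef, hi23]
      _ = r23 r d := by rw [h]
      _ = b := by rw [hddef, hi23]
    exact hab this
  have hae : a ≠ e := by
    intro h
    have : b = c := by
      calc b = r12 r a := rfl
      _ = r12 r e := by rw [h]
      _ = c := by rw [hedef, hi12]
    exact hbc this
  have hbe : b ≠ e := by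
    intro h
    have : a = c := by
      calc a = r12 r b := by rw [hbdef, hi12]
      _ = r12 r e := by rw [h]
      _ = c := by rw [hedef, hi12]
    exact hac this
  have hce : c ≠ e := by
    intro h
    have h1 : c.1 = (r (c.1, c.2.1)).1 := congrArg (fun p => p.1) h
    exact (hoff c hc).1 (hfix1 c.1 c.2.1 h1.symm).symm
  have hde : d ≠ e := by
    intro h
    have h1 : (r (x, y)).1 = (r (x, (r (y, z)).1)).1 := congrArg (fun p => p.1) h
    have h2 : y = (r (y, z)).1 := (hl x).1 h1
    exact hyz (hfix1 y z h2.symm).symm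
  have haf : a ≠ f := by
    intro h
    have : b = d := by
      calc b = r12 r a := rfl
      _ = r12 r f := by rw [h]
      _ = d := by rw [hfdef, hi12]
    exact hbd this
  have hbf : b ≠ f := by
    intro h
    have : a = d := by
      calc a = r12 r b := by rw [hbdef, hi12]
      _ = r12 r f := by rw [h]
      _ = d := by rw [hfdef, hi12]
    exact had this
  have hcf : c ≠ f := by
    intro h
    have h1 : (r (y, z)).2 = (r ((r (x, y)).2, z)).2 := congrArg (fun p => p.2.2) h
    have h2 : y = (r (x, y)).2 := (hr z).1 h1
    exact hxy (hfix2 x y h2.symm)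
  have hdf : d ≠ f := by
    intro h
    have h1 : d.1 = (r (d.1, d.2.1)).1 := congrArg (fun p => p.1) h
    exact (hoff d hd).1 (hfix1 d.1 d.2.1 h1.symm).symm
  have hef : e ≠ f := by
    intro h
    have : c = d := by
      calc c = r12 r e := by rw [hedef, hi12]
      _ = r12 r f := by rw [h]
      _ = d := by rw [hfdef, hi12]
    exact hcd this
  -- conclude
  have hsub : ({a, b, c, d, e, f} : Set (X × X × X)) ⊆ O := by
    intro p hp
    rcases hp with h | h | h | h | h | h <;> subst h <;> assumption
  have hcard : ({a, b, c, d, e, f} : Set (X × X × X)).ncard = 6 := by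
    rw [Set.ncard_insert_of_notMem (by simp [hab, hac, had, hae, haf]),
        Set.ncard_insert_of_notMem (by simp [hbc, hbd, hbe, hbf]),
        Set.ncard_insert_of_notMem (by simp [hcd, hce, hcf]),
        Set.ncard_insert_of_notMem (by simp [hde, hdf]),
        Set.ncard_insert_of_notMem (by simp [hef]),
        Set.ncard_singleton]
  calc 6 = ({a, b, c, d, e, f} : Set (X × X × X)).ncard := hcard.symm
  _ ≤ O.ncard := Set.ncard_le_ncard hsub (Set.toFinite O)
end

section
/- Let (X,r) be a finite quantum binomial set and let O ⊆ X³ be a D-orbit. Write E(O) = O ∩ (((Δ₂ × X) ∪ (X × Δ₂)) \ Δ₃). Then: (i) if O ∩ Δ₃ ≠ ∅ then |O| = 1 (the D-orbit of (x,x,x) is the singleton {(x,x,x)}); (ii) if E(O) ≠ ∅ then |O| ≥ 3 and |E(O)| = 2; (iii) if O ∩ ((Δ₂ × X) ∪ (X × Δ₂)) = ∅ then |O| ≥ 6. -/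
/-!
Both r¹² and r²³ are involutions, and square-freeness with nondegeneracy shows that r¹² fixes
exactly Δ₂ × X and r²³ exactly X × Δ₂. An orbit of the group generated by two involutions `s`, `t`
is a cycle of the rotation `u = s t`: if `s p = p`, the orbit is the `u`-orbit of `p`, on which
`s (uᵏ p) = u⁻ᵏ p` and `t (uᵏ p) = u⁻ᵏ⁻¹ p`. With `n` the period of `p`, the points fixed by `s` or `t`
are the `uᵏ p` with `n ∣ 2k` or `n ∣ 2k + 1`, i.e. exactly `p` and `u^(n/2) p`. An orbit avoiding
both fixed-point sets contains `p, sp, tp, tsp, stp, stsp`, and nondegeneracy keeps these apart.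
-/

open Function Relation Equiv Set

theorem mul_zpow_mul_eq_zpow_neg_mul {G : Type*} [Group G] {a b : G} (ha : a * a = 1)
    (hb : b * b = 1) (k : ℤ) : a * (a * b) ^ k = (a * b) ^ (-k) * a := by
  have ha' : a⁻¹ = a := inv_eq_of_mul_eq_one_right ha
  have hconj : a * (a * b) * a⁻¹ = (a * b)⁻¹ := by
    rw [mul_inv_rev, ha', inv_eq_of_mul_eq_one_right hb, ← mul_assoc, ha, one_mul]
  rw [zpow_neg, ← inv_zpow, ← hconj, conj_zpow, inv_mul_cancel_right]

theorem Int.eq_zero_or_eq_ediv_two_of_dvd {n j : ℤ} (hj0 : 0 ≤ j) (hjn : j < n)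
    (h : n ∣ 2 * j ∨ n ∣ 2 * j + 1) : j = 0 ∨ j = n / 2 := by
  obtain ⟨c, hc⟩ | ⟨c, hc⟩ := h <;>
  · have hc0 : 0 ≤ c := by nlinarith
    have hc2 : c < 2 := by nlinarith
    interval_cases c <;> omega

section DihedralOrbit

variable {α : Type*}

def dihedralOrbit (s t : α → α) (p : α) : Set α :=
  {x | EqvGen (fun x y => s x = y ∨ t x = y) p x}

variable {s t : α → α} {p q : α}

theorem mem_dihedralOrbit_self : p ∈ dihedralOrbit s t p := EqvGen.refl p

theorem mapsTo_left_dihedralOrbit : MapsTo s (dihedralOrbit s t p) (dihedralOrbit s t p) :=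
  fun _ hx => EqvGen.trans _ _ _ hx (EqvGen.rel _ _ (Or.inl rfl))

theorem mapsTo_right_dihedralOrbit : MapsTo t (dihedralOrbit s t p) (dihedralOrbit s t p) :=
  fun _ hx => EqvGen.trans _ _ _ hx (EqvGen.rel _ _ (Or.inr rfl))

theorem dihedralOrbit_comm : dihedralOrbit t s p = dihedralOrbit s t p := by
  ext x
  constructor <;> exact EqvGen.mono (fun _ _ => Or.symm) _ _

theorem dihedralOrbit_eq_of_mem (hq : q ∈ dihedralOrbit s t p) :
    dihedralOrbit s t q = dihedralOrbit s t p := by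
  ext x
  exact ⟨EqvGen.trans _ _ _ hq, EqvGen.trans _ _ _ (EqvGen.symm _ _ hq)⟩

theorem dihedralOrbit_subset (hs : Involutive s) (ht : Involutive t) {S : Set α} (hp : p ∈ S)
    (hsS : MapsTo s S S) (htS : MapsTo t S S) : dihedralOrbit s t p ⊆ S := by
  have hequiv : Equivalence fun x y : α => x ∈ S ↔ y ∈ S :=
    ⟨fun _ => Iff.rfl, Iff.symm, Iff.trans⟩
  intro x hx
  refine (hequiv.eqvGen_iff.mp (EqvGen.mono ?_ _ _ hx)).mp hp
  rintro y _ (rfl | rfl)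
  · exact ⟨fun hy => hsS hy, fun hy => hs y ▸ hsS hy⟩
  · exact ⟨fun hy => htS hy, fun hy => ht y ▸ htS hy⟩

theorem dihedralOrbit_eq_singleton (hs : Involutive s) (ht : Involutive t) (hsp : s p = p)
    (htp : t p = p) : dihedralOrbit s t p = {p} := by
  refine (dihedralOrbit_subset hs ht (mem_singleton p) ?_ ?_).antisymm
    (singleton_subset_iff.mpr mem_dihedralOrbit_self)
  · rintro x rfl; exact hsp
  · rintro x rfl; exact htp

theorem three_le_ncard_dihedralOrbit [Finite α] (hs : Involutive s) (hsp : s p = p)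
    (htp : t p ≠ p) (hstp : s (t p) ≠ t p) : 3 ≤ (dihedralOrbit s t p).ncard := by
  have hp : s (t p) ≠ p := fun h => htp (by rw [← hs (t p), h, hsp])
  calc 3 = ({p, t p, s (t p)} : Set α).ncard :=
        (ncard_eq_three.mpr ⟨_, _, _, htp.symm, hp.symm, hstp.symm, rfl⟩).symm
    _ ≤ _ := by
      refine ncard_le_ncard ?_
      have htp' : t p ∈ dihedralOrbit s t p := mapsTo_right_dihedralOrbit mem_dihedralOrbit_self
      simp only [insert_subset_iff, singleton_subset_iff]
      exact ⟨mem_dihedralOrbit_self, htp', mapsTo_left_dihedralOrbit htp'⟩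

theorem six_le_ncard_dihedralOrbit [Finite α] (hs : Involutive s) (ht : Involutive t)
    (hfree : ∀ x ∈ dihedralOrbit s t p, s x ≠ x ∧ t x ≠ x) (hst : s p ≠ t p)
    (htsst : t (s p) ≠ s (t p)) : 6 ≤ (dihedralOrbit s t p).ncard := by
  classical
  set O := dihedralOrbit s t p
  have hsO : MapsTo s O O := mapsTo_left_dihedralOrbit
  have htO : MapsTo t O O := mapsTo_right_dihedralOrbit
  have hp : p ∈ O := mem_dihedralOrbit_self
  have hfp := hfree _ hp
  have hfsp := hfree _ (hsO hp)
  have hftp := hfree _ (htO hp)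
  have hftsp := hfree _ (htO (hsO hp))
  have hfstp := hfree _ (hsO (htO hp))
  have hnodup : [p, s p, t p, t (s p), s (t p), s (t (s p))].Nodup := by
    have hs' : ∀ x, s (s x) = x := hs
    have ht' : ∀ x, t (t x) = x := ht
    simp only [List.nodup_cons, List.mem_cons, List.not_mem_nil, List.nodup_nil]
    grind
  calc 6 = (↑[p, s p, t p, t (s p), s (t p), s (t (s p))].toFinset : Set α).ncard := by
        rw [ncard_coe_finset, List.toFinset_card_of_nodup hnodup]; rfl
    _ ≤ O.ncard := by
      refine ncard_le_ncard fun x hx => ?_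
      simp only [List.coe_toFinset, List.mem_cons, List.not_mem_nil, mem_ofPred_eq, or_false] at hx
      rcases hx with rfl | rfl | rfl | rfl | rfl | rfl
      exacts [hp, hsO hp, htO hp, htO (hsO hp), hsO (htO hp), hsO (htO (hsO hp))]

variable (hs : Involutive s) (ht : Involutive t)

def dihedralRotation : Perm α := hs.toPerm s * ht.toPerm t

theorem dihedralRotation_apply (x : α) : dihedralRotation hs ht x = s (t x) := rfl

theorem left_zpow_dihedralRotation_apply (k : ℤ) (x : α) :
    s ((dihedralRotation hs ht ^ k) x) = (dihedralRotation hs ht ^ (-k)) (s x) :=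
  DFunLike.congr_fun
    (mul_zpow_mul_eq_zpow_neg_mul (a := hs.toPerm s) (b := ht.toPerm t) (Equiv.ext hs)
      (Equiv.ext ht) k) x

theorem right_zpow_dihedralRotation_apply (k : ℤ) (x : α) :
    t ((dihedralRotation hs ht ^ k) x) = (dihedralRotation hs ht ^ (-k - 1)) (s x) := by
  rw [show -k - 1 = -(1 + k) by ring, ← left_zpow_dihedralRotation_apply, zpow_one_add,
    Perm.mul_apply, dihedralRotation_apply, hs]

theorem dihedralOrbit_eq_sameCycle (hsp : s p = p) :
    dihedralOrbit s t p = {x | (dihedralRotation hs ht).SameCycle p x} := by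
  refine (dihedralOrbit_subset hs ht (Perm.SameCycle.refl _ p) ?_ ?_).antisymm ?_
  · rintro x ⟨k, rfl⟩
    exact ⟨-k, by rw [left_zpow_dihedralRotation_apply hs ht, hsp]⟩
  · rintro x ⟨k, rfl⟩
    exact ⟨-k - 1, by rw [right_zpow_dihedralRotation_apply hs ht, hsp]⟩
  · have hnat : ∀ n : ℕ, (dihedralRotation hs ht ^ n) p ∈ dihedralOrbit s t p := by
      intro n
      induction n with
      | zero => exact mem_dihedralOrbit_self
      | succ n ih =>
        rw [pow_succ', Perm.mul_apply, dihedralRotation_apply]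
        exact mapsTo_left_dihedralOrbit (mapsTo_right_dihedralOrbit ih)
    rintro x ⟨k, rfl⟩
    obtain ⟨n, rfl | rfl⟩ := Int.eq_nat_or_neg k
    · exact_mod_cast hnat n
    · have h := left_zpow_dihedralRotation_apply hs ht n p
      rw [hsp, zpow_natCast] at h
      exact h ▸ mapsTo_left_dihedralOrbit (hnat n)

theorem zpow_dihedralRotation_apply_eq_iff (i j : ℤ) :
    (dihedralRotation hs ht ^ i) p = (dihedralRotation hs ht ^ j) p ↔
      (MulAction.period (dihedralRotation hs ht) p : ℤ) ∣ j - i := by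
  rw [← (dihedralRotation hs ht ^ (-i)).apply_eq_iff_eq, ← Perm.mul_apply, ← Perm.mul_apply,
    ← zpow_add, ← zpow_add, neg_add_cancel, zpow_zero, Perm.one_apply, eq_comm, neg_add_eq_sub]
  exact MulAction.zpow_smul_eq_iff_period_dvd (g := dihedralRotation hs ht)

theorem ncard_fixed_mem_dihedralOrbit [Finite α] (hs : Involutive s) (ht : Involutive t)
    (hsp : s p = p) (htp : t p ≠ p) :
    {x ∈ dihedralOrbit s t p | s x = x ∨ t x = x}.ncard = 2 := by
  set u := dihedralRotation hs ht
  set n := MulAction.period u p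
  have hn : 0 < n := MulAction.period_pos_of_orderOf_pos (orderOf_pos u) p
  have hn1 : n ≠ 1 := fun h => htp <| by
    have hu : s (t p) = p := MulAction.period_eq_one_iff.mp h
    rw [← hs (t p), hu, hsp]
  have hfix (k : ℤ) : (s ((u ^ k) p) = (u ^ k) p ∨ t ((u ^ k) p) = (u ^ k) p) ↔
      (n : ℤ) ∣ 2 * k ∨ (n : ℤ) ∣ 2 * k + 1 := by
    rw [left_zpow_dihedralRotation_apply hs ht, right_zpow_dihedralRotation_apply hs ht, hsp,
      zpow_dihedralRotation_apply_eq_iff, zpow_dihedralRotation_apply_eq_iff,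
      show k - -k = 2 * k by ring, show k - (-k - 1) = 2 * k + 1 by ring]
  have hset : {x ∈ dihedralOrbit s t p | s x = x ∨ t x = x} = {p, (u ^ (n / 2 : ℤ)) p} := by
    rw [dihedralOrbit_eq_sameCycle hs ht hsp]
    ext x
    constructor
    · rintro ⟨⟨k, rfl⟩, hx⟩
      have hk : (u ^ k) p = (u ^ (k % n)) p :=
        (zpow_dihedralRotation_apply_eq_iff hs ht _ _).mpr ⟨-(k / n), by rw [Int.emod_def]; ring⟩
      rw [hk, hfix] at hx
      rw [hk]
      rcases Int.eq_zero_or_eq_ediv_two_of_dvd (Int.emod_nonneg k (by omega))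
        (Int.emod_lt_of_pos k (by omega)) hx with h | h <;> rw [h]
      · exact Or.inl rfl
      · exact Or.inr rfl
    · rintro (rfl | rfl)
      · exact ⟨Perm.SameCycle.refl _ _, Or.inl hsp⟩
      · refine ⟨⟨_, rfl⟩, (hfix _).mpr ?_⟩
        rcases Int.emod_two_eq_zero_or_one n with h | h
        · exact Or.inl ⟨1, by omega⟩
        · exact Or.inr ⟨1, by omega⟩
  rw [hset, ncard_pair]
  intro h
  have hdvd : (n : ℤ) ∣ n / 2 - 0 :=
    (zpow_dihedralRotation_apply_eq_iff hs ht 0 _).mp (by rwa [zpow_zero])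
  rw [sub_zero] at hdvd
  have := Int.le_of_dvd (by omega) hdvd
  omega

theorem ncard_fixed_mem_dihedralOrbit_of_xor [Finite α] (hs : Involutive s) (ht : Involutive t)
    (hp : Xor (s p = p) (t p = p)) :
    {x ∈ dihedralOrbit s t p | s x = x ∨ t x = x}.ncard = 2 := by
  rcases hp with ⟨hsp, htp⟩ | ⟨htp, hsp⟩
  · exact ncard_fixed_mem_dihedralOrbit hs ht hsp htp
  · simpa only [dihedralOrbit_comm, or_comm] using ncard_fixed_mem_dihedralOrbit ht hs htp hsp

end DihedralOrbit

namespace IsQuantumBinomial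

variable {X : Type*} {r : X × X → X × X} (h : IsQuantumBinomial r) {p : X × X × X}

include h

theorem eq_of_fst_eq {x y : X} (hxy : (r (x, y)).1 = x) : y = x :=
  (h.2.1 x).1 (show (r (x, y)).1 = (r (x, x)).1 by rw [hxy, h.2.2.2 x])

theorem eq_of_snd_eq {x y : X} (hxy : (r (x, y)).2 = y) : x = y :=
  (h.2.2.1 y).1 (show (r (x, y)).2 = (r (y, y)).2 by rw [hxy, h.2.2.2 y])

theorem involutive_r12 : Involutive (r12 r) := fun p => by
  simp only [r12, Prod.mk.eta, h.1 _]

theorem involutive_r23 : Involutive (r23 r) := fun p => by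
  simp only [r23, Prod.mk.eta, h.1 _]

theorem r12_eq_self_iff : r12 r p = p ↔ p ∈ Diag2X := by
  obtain ⟨x, y, z⟩ := p
  refine ⟨fun hp => (h.eq_of_fst_eq (congrArg Prod.fst hp : (r (x, y)).1 = x)).symm, fun hp => ?_⟩
  simp only [Diag2X, mem_ofPred_eq] at hp
  subst hp
  simp [r12, h.2.2.2]

theorem r23_eq_self_iff : r23 r p = p ↔ p ∈ XDiag2 := by
  obtain ⟨x, y, z⟩ := p
  refine ⟨fun hp => (h.eq_of_fst_eq (congrArg (·.2.1) hp : (r (y, z)).1 = y)).symm, fun hp => ?_⟩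
  simp only [XDiag2, mem_ofPred_eq] at hp
  subst hp
  simp [r23, h.2.2.2]

theorem xor_r12_eq_self_r23_eq_self (hp : p ∈ (Diag2X ∪ XDiag2) \ Diag3) :
    Xor (r12 r p = p) (r23 r p = p) := by
  rw [h.r12_eq_self_iff, h.r23_eq_self_iff]
  obtain ⟨hp | hp, hp3⟩ := hp
  · exact Or.inl ⟨hp, fun hp' => hp3 ⟨hp, hp'⟩⟩
  · exact Or.inr ⟨hp, fun hp' => hp3 ⟨hp', hp⟩⟩

theorem r23_notMem_Diag2X (hp : p ∈ Diag2X) (hp' : p ∉ XDiag2) : r23 r p ∉ Diag2X := by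
  obtain ⟨x, y, z⟩ := p
  simp only [Diag2X, XDiag2, mem_ofPred_eq] at hp hp' ⊢
  subst hp
  exact fun hx => hp' (h.eq_of_fst_eq hx.symm).symm

theorem r12_notMem_XDiag2 (hp : p ∈ XDiag2) (hp' : p ∉ Diag2X) : r12 r p ∉ XDiag2 := by
  obtain ⟨x, y, z⟩ := p
  simp only [Diag2X, XDiag2, mem_ofPred_eq] at hp hp' ⊢
  subst hp
  exact fun hy => hp' (h.eq_of_snd_eq hy)

theorem r12_ne_r23 (hp : p ∉ Diag2X) : r12 r p ≠ r23 r p :=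
  fun hp' => hp (h.eq_of_fst_eq (congrArg Prod.fst hp' : (r (p.1, p.2.1)).1 = p.1)).symm

theorem r23_r12_ne_r12_r23 (hp : p ∉ Diag2X) : r23 r (r12 r p) ≠ r12 r (r23 r p) := by
  intro hp'
  have hz : (r ((r (p.1, p.2.1)).2, p.2.2)).2 = (r (p.2.1, p.2.2)).2 := congrArg (·.2.2) hp'
  exact hp (h.eq_of_snd_eq ((h.2.2.1 p.2.2).1 hz))

theorem dihedralOrbit_eq_singleton (hp : p ∈ Diag3) : dihedralOrbit (r12 r) (r23 r) p = {p} :=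
  _root_.dihedralOrbit_eq_singleton h.involutive_r12 h.involutive_r23
    (h.r12_eq_self_iff.mpr hp.1) (h.r23_eq_self_iff.mpr hp.2)

theorem dihedralOrbit_inter_eq (hp : p ∈ (Diag2X ∪ XDiag2) \ Diag3) :
    dihedralOrbit (r12 r) (r23 r) p ∩ ((Diag2X ∪ XDiag2) \ Diag3) =
      {x ∈ dihedralOrbit (r12 r) (r23 r) p | r12 r x = x ∨ r23 r x = x} := by
  ext x
  simp only [mem_inter_iff, mem_sdiff, mem_union, mem_sep_iff, h.r12_eq_self_iff,
    h.r23_eq_self_iff, and_congr_right_iff, and_iff_left_iff_imp]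
  intro hx _ hx3
  have hpx : p ∈ dihedralOrbit (r12 r) (r23 r) x :=
    dihedralOrbit_eq_of_mem hx ▸ mem_dihedralOrbit_self
  rw [h.dihedralOrbit_eq_singleton hx3, mem_singleton_iff] at hpx
  exact hp.2 (hpx ▸ hx3)

theorem three_le_ncard_dihedralOrbit [Finite X] (hp : p ∈ (Diag2X ∪ XDiag2) \ Diag3) :
    3 ≤ (dihedralOrbit (r12 r) (r23 r) p).ncard := by
  obtain ⟨hp | hp, hp3⟩ := hp
  · have hp' : p ∉ XDiag2 := fun hp' => hp3 ⟨hp, hp'⟩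
    exact _root_.three_le_ncard_dihedralOrbit h.involutive_r12 (h.r12_eq_self_iff.mpr hp)
      (mt h.r23_eq_self_iff.mp hp') (mt h.r12_eq_self_iff.mp (h.r23_notMem_Diag2X hp hp'))
  · have hp' : p ∉ Diag2X := fun hp' => hp3 ⟨hp', hp⟩
    rw [← dihedralOrbit_comm]
    exact _root_.three_le_ncard_dihedralOrbit h.involutive_r23 (h.r23_eq_self_iff.mpr hp)
      (mt h.r12_eq_self_iff.mp hp') (mt h.r23_eq_self_iff.mp (h.r12_notMem_XDiag2 hp hp'))

theorem six_le_ncard_dihedralOrbit [Finite X]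
    (hO : Disjoint (dihedralOrbit (r12 r) (r23 r) p) (Diag2X ∪ XDiag2)) :
    6 ≤ (dihedralOrbit (r12 r) (r23 r) p).ncard := by
  have hfree (x) (hx : x ∈ dihedralOrbit (r12 r) (r23 r) p) : x ∉ Diag2X ∧ x ∉ XDiag2 :=
    not_or.mp (hO.notMem_of_mem_left hx)
  refine _root_.six_le_ncard_dihedralOrbit h.involutive_r12 h.involutive_r23
    (fun x hx => ⟨mt h.r12_eq_self_iff.mp (hfree x hx).1, mt h.r23_eq_self_iff.mp (hfree x hx).2⟩)
    (h.r12_ne_r23 (hfree p mem_dihedralOrbit_self).1)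
    (h.r23_r12_ne_r12_r23 (hfree p mem_dihedralOrbit_self).1)

end IsQuantumBinomial

theorem IsDOrbit.eq_dihedralOrbit {X : Type*} {r : X × X → X × X} {O : Set (X × X × X)}
    (hO : IsDOrbit r O) {p : X × X × X} (hp : p ∈ O) : O = dihedralOrbit (r12 r) (r23 r) p := by
  obtain ⟨a, rfl⟩ := hO
  exact (dihedralOrbit_eq_of_mem hp).symm

/-- Trichotomy for D-orbits of a finite quantum binomial set:
(i) an orbit meeting Δ₃ is a singleton;
(ii) an orbit meeting ((Δ₂ × X) ∪ (X × Δ₂)) \ Δ₃ has at least 3 elements and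
meets that set in exactly 2 elements;
(iii) an orbit disjoint from (Δ₂ × X) ∪ (X × Δ₂) has at least 6 elements. -/
theorem dOrbit_trichotomy {X : Type*} [Fintype X]
    (r : X × X → X × X) (hqb : IsQuantumBinomial r)
    (O : Set (X × X × X)) (hO : IsDOrbit r O) :
    ((O ∩ Diag3).Nonempty → O.ncard = 1) ∧
    ((O ∩ ((Diag2X ∪ XDiag2) \ Diag3)).Nonempty →
      3 ≤ O.ncard ∧ (O ∩ ((Diag2X ∪ XDiag2) \ Diag3)).ncard = 2) ∧
    (O ∩ (Diag2X ∪ XDiag2) = ∅ → 6 ≤ O.ncard) := by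
  refine ⟨fun ⟨p, hpO, hp⟩ => ?_, fun ⟨p, hpO, hp⟩ => ?_, fun hO' => ?_⟩
  · rw [hO.eq_dihedralOrbit hpO, hqb.dihedralOrbit_eq_singleton hp, ncard_singleton]
  · rw [hO.eq_dihedralOrbit hpO, hqb.dihedralOrbit_inter_eq hp]
    exact ⟨hqb.three_le_ncard_dihedralOrbit hp, ncard_fixed_mem_dihedralOrbit_of_xor
      hqb.involutive_r12 hqb.involutive_r23 (hqb.xor_r12_eq_self_r23_eq_self hp)⟩
  · obtain ⟨a, rfl⟩ := hO
    exact hqb.six_le_ncard_dihedralOrbit (disjoint_iff_inter_eq_empty.mpr hO')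
end

section
/- Let (X,r) be a finite quantum binomial set with |X| = n. Then the number of D-orbits O in X³ of type (ii), i.e. with O ∩ (((Δ₂ × X) ∪ (X × Δ₂)) \ Δ₃) ≠ ∅, is exactly n(n−1). -/
/-!
r¹² and r²³ are involutions of X³ whose fixed-point sets are Δ₂ × X and X × Δ₂, so the points of
type (ii) are those fixed by exactly one of them; there are 2n(n-1) such points.

Let s, t be involutions and a a point with s a = a. The group ⟨s, t⟩ moves a only through the
rotation g = s t: the orbit of a is {gʲ a}, and s, t act on it as j ↦ -j and j ↦ -j-1. Hence, if m
is the period of a under g, the point gʲ a is fixed by s iff m ∣ 2j and by t iff m ∣ 2j+1. When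
t a ≠ a we have m ≥ 2, and exactly two residues qualify: j ≡ 0 and j ≡ ⌊m/2⌋. So every orbit of
type (ii) contains exactly two points of type (ii), and there are n(n-1) of them.
-/

open Function Equiv Relation

namespace Equiv.Perm

variable {α : Type*}

theorem zpow_apply_eq_zpow_apply_iff (g : Perm α) (a : α) (i j : ℤ) :
    (g ^ i) a = (g ^ j) a ↔ (minimalPeriod g a : ℤ) ∣ i - j := by
  have h := MulAction.zpow_smul_eq_iff_minimalPeriod_dvd (a := g) (b := a) (n := i - j)
  rwa [Perm.smul_def, ← (g ^ j).injective.eq_iff, ← mul_apply, ← zpow_add, add_sub_cancel] at h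

theorem SameCycle.exists_zpow_apply_eq_of_lt {g : Perm α} {a c : α} (h : g.SameCycle a c)
    (hg : 0 < minimalPeriod g a) :
    ∃ j : ℤ, 0 ≤ j ∧ j < minimalPeriod g a ∧ (g ^ j) a = c := by
  obtain ⟨i, rfl⟩ := h
  refine ⟨i % minimalPeriod g a, Int.emod_nonneg _ (by omega), Int.emod_lt_of_pos _ (by omega), ?_⟩
  rw [zpow_apply_eq_zpow_apply_iff, Int.emod_def]
  exact ⟨-(i / minimalPeriod g a), by ring⟩

end Equiv.Perm

theorem Int.dvd_iff_eq_zero_or_eq_of_nonneg_of_lt_two_mul {m x : ℤ} (h0 : 0 ≤ x) (h2 : x < 2 * m) :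
    m ∣ x ↔ x = 0 ∨ x = m := by
  constructor
  · rintro ⟨k, rfl⟩
    obtain ⟨hk0, hk2⟩ : 0 ≤ k ∧ k < 2 := ⟨by nlinarith, by nlinarith⟩
    interval_cases k <;> simp
  · rintro (rfl | rfl) <;> simp

theorem Int.xor_dvd_two_mul_iff {m j : ℤ} (hm : 2 ≤ m) (h0 : 0 ≤ j) (h1 : j < m) :
    Xor (m ∣ 2 * j) (m ∣ 2 * j + 1) ↔ m ∣ j ∨ m ∣ j - m / 2 := by
  rw [← dvd_add_self_right (b := j - m / 2),
    Int.dvd_iff_eq_zero_or_eq_of_nonneg_of_lt_two_mul (by omega) (by omega),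
    Int.dvd_iff_eq_zero_or_eq_of_nonneg_of_lt_two_mul (by omega) (by omega),
    Int.dvd_iff_eq_zero_or_eq_of_nonneg_of_lt_two_mul (by omega) (by omega),
    Int.dvd_iff_eq_zero_or_eq_of_nonneg_of_lt_two_mul (by omega) (by omega), xor_def]
  omega

theorem Set.ncard_eq_mul_ncard_image_of_ncard_fiber {α β : Type*} {f : α → β} {s : Set α}
    (hs : s.Finite) {k : ℕ} (hk : ∀ a ∈ s, {b ∈ s | f b = f a}.ncard = k) :
    s.ncard = k * (f '' s).ncard := by
  classical
  obtain ⟨u, rfl⟩ := hs.exists_finset_coe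
  have hfib : ∀ y ∈ u.image f, {a ∈ u | f a = y}.card = k := by
    intro y hy
    obtain ⟨a, ha, rfl⟩ := Finset.mem_image.mp hy
    rw [← hk a ha, ← Set.ncard_coe_finset, Finset.coe_filter]
    rfl
  rw [Set.ncard_coe_finset, ← Finset.coe_image, Set.ncard_coe_finset]
  exact le_antisymm (Finset.card_le_mul_card_image u k fun y hy => (hfib y hy).le)
    (Finset.mul_card_image_le_card u k fun y hy => (hfib y hy).ge)

theorem Equivalence.setOf_eq_setOf_iff {α : Type*} {R : α → α → Prop} (h : Equivalence R)
    {a b : α} : {c | R a c} = {c | R b c} ↔ R a b := by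
  refine ⟨fun e => h.symm ?_, fun hab => Set.ext fun c => ⟨h.trans (h.symm hab), h.trans hab⟩⟩
  change a ∈ {c | R b c}
  exact e ▸ h.refl a

theorem Equivalence.ncard_eq_mul_ncard_classes_inter {α : Type*} {R : α → α → Prop}
    (hR : Equivalence R) {S : Set α} (hS : S.Finite) {k : ℕ}
    (hk : ∀ a ∈ S, {b | R a b ∧ b ∈ S}.ncard = k) :
    S.ncard = k * {O : Set α | (∃ a, O = {b | R a b}) ∧ (O ∩ S).Nonempty}.ncard := by
  have hclasses : {O : Set α | (∃ a, O = {b | R a b}) ∧ (O ∩ S).Nonempty} =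
      (fun a => {b | R a b}) '' S := by
    ext O
    constructor
    · rintro ⟨⟨a, rfl⟩, c, hac, hc⟩
      exact ⟨c, hc, hR.setOf_eq_setOf_iff.mpr (hR.symm hac)⟩
    · rintro ⟨c, hc, rfl⟩
      exact ⟨⟨c, rfl⟩, c, hR.refl c, hc⟩
  rw [hclasses]
  refine Set.ncard_eq_mul_ncard_image_of_ncard_fiber hS fun a ha => ?_
  rw [← hk a ha]
  congr 1
  ext b
  simp only [Set.mem_ofPred_eq, hR.setOf_eq_setOf_iff]
  exact ⟨fun ⟨hb, hba⟩ => ⟨hR.symm hba, hb⟩, fun ⟨hab, hb⟩ => ⟨hb, hR.symm hab⟩⟩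

section TwoInvolutions

variable {α : Type*} {s t : α → α}

def genStep (s t : α → α) (x y : α) : Prop := s x = y ∨ t x = y

theorem genStep_comm : genStep t s = genStep s t := by
  ext x y; exact or_comm

namespace Function.Involutive

def rotation (hs : Involutive s) (ht : Involutive t) : Perm α :=
  hs.toPerm s * ht.toPerm t

variable (hs : Involutive s) (ht : Involutive t)

theorem rotation_apply (x : α) : hs.rotation ht x = s (t x) := rfl

theorem rotation_inv_apply (x : α) : (hs.rotation ht)⁻¹ x = t (s x) := by
  rw [Perm.inv_eq_iff_eq, rotation_apply, ht (s x), hs x]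

theorem left_apply_rotation_zpow (j : ℤ) (x : α) :
    s ((hs.rotation ht ^ j) x) = (hs.rotation ht ^ (-j)) (s x) := by
  have h : SemiconjBy (hs.toPerm s) (hs.rotation ht) (hs.rotation ht)⁻¹ := by
    ext y
    simp only [Perm.mul_apply, coe_toPerm, rotation_apply, rotation_inv_apply, hs (t y), hs y]
  simpa [zpow_neg] using congrArg (· x) (h.zpow_right j)

theorem right_apply_rotation_zpow (j : ℤ) (x : α) :
    t ((hs.rotation ht ^ j) x) = (hs.rotation ht ^ (-j)) (t x) := by
  have h : SemiconjBy (ht.toPerm t) (hs.rotation ht) (hs.rotation ht)⁻¹ := by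
    ext y
    simp only [Perm.mul_apply, coe_toPerm, rotation_apply, rotation_inv_apply]
  simpa [zpow_neg] using congrArg (· x) (h.zpow_right j)

variable {a : α}

theorem left_apply_rotation_zpow_of_fixed (ha : s a = a) (j : ℤ) :
    s ((hs.rotation ht ^ j) a) = (hs.rotation ht ^ (-j)) a := by
  rw [left_apply_rotation_zpow hs ht, ha]

theorem right_apply_rotation_zpow_of_fixed (ha : s a = a) (j : ℤ) :
    t ((hs.rotation ht ^ j) a) = (hs.rotation ht ^ (-j - 1)) a := by
  rw [right_apply_rotation_zpow hs ht, ← ha, ← rotation_inv_apply hs ht, ha, zpow_sub_one,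
    Perm.mul_apply]

theorem eqvGen_genStep_rotation_zpow (j : ℤ) :
    ∀ x, EqvGen (genStep s t) x ((hs.rotation ht ^ j) x) := by
  have step : ∀ y, EqvGen (genStep s t) y (hs.rotation ht y) := fun y =>
    .trans _ (t y) _ (.rel _ _ (Or.inr rfl)) (.rel _ _ (Or.inl rfl))
  induction j using Int.induction_on with
  | zero => exact EqvGen.refl
  | succ j ih =>
    intro x
    rw [zpow_add_one, Perm.mul_apply]
    exact (step x).trans _ _ _ (ih _)
  | pred j ih =>
    intro x
    rw [zpow_sub_one, Perm.mul_apply]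
    have h : EqvGen (genStep s t) x ((hs.rotation ht)⁻¹ x) := by
      simpa using (step ((hs.rotation ht)⁻¹ x)).symm
    exact h.trans _ _ _ (ih _)

theorem sameCycle_genStep_iff (ha : s a = a) {x y : α} (h : genStep s t x y) :
    (hs.rotation ht).SameCycle a x ↔ (hs.rotation ht).SameCycle a y := by
  have closed : ∀ z, (hs.rotation ht).SameCycle a z →
      (hs.rotation ht).SameCycle a (s z) ∧ (hs.rotation ht).SameCycle a (t z) := by
    rintro _ ⟨j, rfl⟩
    exact ⟨⟨-j, (left_apply_rotation_zpow_of_fixed hs ht ha j).symm⟩,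
      ⟨-j - 1, (right_apply_rotation_zpow_of_fixed hs ht ha j).symm⟩⟩
  rcases h with rfl | rfl
  · exact ⟨fun hx => (closed x hx).1, fun hx => hs x ▸ (closed _ hx).1⟩
  · exact ⟨fun hx => (closed x hx).2, fun hx => ht x ▸ (closed _ hx).2⟩

theorem eqvGen_genStep_iff_sameCycle (ha : s a = a) {c : α} :
    EqvGen (genStep s t) a c ↔ (hs.rotation ht).SameCycle a c := by
  constructor
  · intro h
    suffices ∀ x y, EqvGen (genStep s t) x y →
        ((hs.rotation ht).SameCycle a x ↔ (hs.rotation ht).SameCycle a y) from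
      (this a c h).mp (Perm.SameCycle.refl _ _)
    intro x y hxy
    induction hxy with
    | rel x y h => exact sameCycle_genStep_iff hs ht ha h
    | refl => exact Iff.rfl
    | symm x y _ ih => exact ih.symm
    | trans x y z _ _ ih₁ ih₂ => exact ih₁.trans ih₂
  · rintro ⟨j, rfl⟩
    exact eqvGen_genStep_rotation_zpow hs ht j a

theorem left_apply_rotation_zpow_eq_self_iff (ha : s a = a) (j : ℤ) :
    s ((hs.rotation ht ^ j) a) = (hs.rotation ht ^ j) a ↔
      (minimalPeriod (hs.rotation ht) a : ℤ) ∣ 2 * j := by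
  rw [left_apply_rotation_zpow_of_fixed hs ht ha, Perm.zpow_apply_eq_zpow_apply_iff,
    show -j - j = -(2 * j) by ring, dvd_neg]

theorem right_apply_rotation_zpow_eq_self_iff (ha : s a = a) (j : ℤ) :
    t ((hs.rotation ht ^ j) a) = (hs.rotation ht ^ j) a ↔
      (minimalPeriod (hs.rotation ht) a : ℤ) ∣ 2 * j + 1 := by
  rw [right_apply_rotation_zpow_of_fixed hs ht ha, Perm.zpow_apply_eq_zpow_apply_iff,
    show -j - 1 - j = -(2 * j + 1) by ring, dvd_neg]

theorem xor_fixed_rotation_zpow_iff (ha : s a = a)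
    (hm : 2 ≤ (minimalPeriod (hs.rotation ht) a : ℤ)) {j : ℤ} (h0 : 0 ≤ j)
    (h1 : j < minimalPeriod (hs.rotation ht) a) :
    Xor (s ((hs.rotation ht ^ j) a) = (hs.rotation ht ^ j) a)
        (t ((hs.rotation ht ^ j) a) = (hs.rotation ht ^ j) a) ↔
      (hs.rotation ht ^ j) a = (hs.rotation ht ^ (0 : ℤ)) a ∨
        (hs.rotation ht ^ j) a =
          (hs.rotation ht ^ ((minimalPeriod (hs.rotation ht) a : ℤ) / 2)) a := by
  rw [left_apply_rotation_zpow_eq_self_iff hs ht ha,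
    right_apply_rotation_zpow_eq_self_iff hs ht ha, Perm.zpow_apply_eq_zpow_apply_iff,
    Perm.zpow_apply_eq_zpow_apply_iff, sub_zero]
  exact Int.xor_dvd_two_mul_iff hm h0 h1

theorem exists_ne_sameCycle_xor_fixed_eq_pair [Finite α] (ha : s a = a) (hta : t a ≠ a) :
    ∃ b ≠ a, {c | (hs.rotation ht).SameCycle a c ∧ Xor (s c = c) (t c = c)} = {a, b} := by
  have hpos : 0 < minimalPeriod (hs.rotation ht) a :=
    minimalPeriod_pos_of_mem_periodicPts ((hs.rotation ht).injective.mem_periodicPts a)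
  have hm : 2 ≤ (minimalPeriod (hs.rotation ht) a : ℤ) := by
    have h1 : ¬ (minimalPeriod (hs.rotation ht) a : ℤ) ∣ 1 := by
      simpa using (right_apply_rotation_zpow_eq_self_iff hs ht ha 0).not.mp hta
    have h2 : minimalPeriod (hs.rotation ht) a ≠ 1 := by
      intro h; rw [h] at h1; exact h1 (dvd_refl 1)
    omega
  have key := fun j => xor_fixed_rotation_zpow_iff hs ht ha hm (j := j)
  simp only [zpow_zero, Perm.one_apply] at key
  refine ⟨(hs.rotation ht ^ ((minimalPeriod (hs.rotation ht) a : ℤ) / 2)) a, ?_, ?_⟩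
  · intro h
    have hd := (Perm.zpow_apply_eq_zpow_apply_iff (hs.rotation ht) a _ 0).mp (by simpa using h)
    rw [sub_zero, Int.dvd_iff_eq_zero_or_eq_of_nonneg_of_lt_two_mul (by omega) (by omega)] at hd
    omega
  · ext c
    simp only [Set.mem_ofPred_eq, Set.mem_insert_iff, Set.mem_singleton_iff]
    constructor
    · rintro ⟨hc, hx⟩
      obtain ⟨j, h0, h1, rfl⟩ := hc.exists_zpow_apply_eq_of_lt hpos
      exact (key j h0 h1).mp hx
    · rintro (rfl | rfl)
      · exact ⟨.refl _ _, by simpa using (key 0 le_rfl (by omega)).mpr (Or.inl rfl)⟩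
      · exact ⟨⟨_, rfl⟩, (key _ (by omega) (by omega)).mpr (Or.inr rfl)⟩

end Function.Involutive

theorem ncard_eqvGen_genStep_xor_fixed [Finite α] (hs : Involutive s) (ht : Involutive t) {a : α}
    (ha : Xor (s a = a) (t a = a)) :
    {c | EqvGen (genStep s t) a c ∧ Xor (s c = c) (t c = c)}.ncard = 2 := by
  wlog hsa : s a = a generalizing s t
  · have hta : t a = a := by rw [xor_def] at ha; tauto
    rw [← genStep_comm]
    simpa only [xor_comm (s _ = _)] using this ht hs (by rwa [xor_comm]) hta
  have hta : t a ≠ a := by rw [xor_def] at ha; tauto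
  obtain ⟨b, hba, hpair⟩ := hs.exists_ne_sameCycle_xor_fixed_eq_pair ht hsa hta
  simp_rw [hs.eqvGen_genStep_iff_sameCycle ht hsa, hpair]
  exact Set.ncard_pair hba.symm

end TwoInvolutions

theorem ncard_setOf_xor_diag (X : Type*) [Fintype X] :
    {p : X × X × X | Xor (p.1 = p.2.1) (p.2.1 = p.2.2)}.ncard =
      2 * (Fintype.card X * (Fintype.card X - 1)) := by
  classical
  have hoff : (Set.univ : Set X).offDiag.ncard = Fintype.card X * (Fintype.card X - 1) := by
    rw [← Finset.coe_univ, ← Finset.coe_offDiag, Set.ncard_coe_finset, Finset.offDiag_card,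
      Finset.card_univ, Nat.mul_sub_one]
  have hsplit : {p : X × X × X | Xor (p.1 = p.2.1) (p.2.1 = p.2.2)} =
      (fun q : X × X => (q.1, q.1, q.2)) '' Set.univ.offDiag ∪
        (fun q : X × X => (q.1, q.2, q.2)) '' Set.univ.offDiag := by
    ext ⟨x, y, z⟩
    simp only [Set.mem_ofPred_eq, Set.mem_union, Set.mem_image, Set.mem_offDiag, Set.mem_univ,
      true_and, Prod.exists, Prod.mk.injEq, xor_def]
    constructor
    · rintro (⟨rfl, h⟩ | ⟨rfl, h⟩)
      · exact Or.inl ⟨x, z, h, rfl, rfl, rfl⟩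
      · exact Or.inr ⟨x, y, h, rfl, rfl, rfl⟩
    · rintro (⟨a, b, h, rfl, rfl, rfl⟩ | ⟨a, b, h, rfl, rfl, rfl⟩)
      · exact Or.inl ⟨rfl, h⟩
      · exact Or.inr ⟨rfl, h⟩
  have hdisj : Disjoint ((fun q : X × X => (q.1, q.1, q.2)) '' Set.univ.offDiag)
      ((fun q : X × X => (q.1, q.2, q.2)) '' Set.univ.offDiag) := by
    rw [Set.disjoint_left]
    rintro _ ⟨⟨x, z⟩, hxz, rfl⟩ ⟨⟨x', y'⟩, -, h⟩
    simp only [Prod.mk.injEq] at h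
    exact hxz.2.2 (h.2.1.symm.trans h.2.2)
  rw [hsplit, Set.ncard_union_eq hdisj, Set.ncard_image_of_injective,
    Set.ncard_image_of_injective, hoff, two_mul]
  · rintro ⟨x, y⟩ ⟨x', y'⟩ h; simp_all
  · rintro ⟨x, y⟩ ⟨x', y'⟩ h; simp_all

section QuantumBinomial

variable {X : Type*} {r : X × X → X × X}

theorem IsQuantumBinomial.apply_eq_self_iff (hqb : IsQuantumBinomial r) (q : X × X) :
    r q = q ↔ q.1 = q.2 := by
  obtain ⟨x, y⟩ := q
  refine ⟨fun h => ?_, fun (h : x = y) => h ▸ hqb.2.2.2 x⟩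
  have : (r (x, y)).1 = (r (x, x)).1 := by rw [h, hqb.2.2.2 x]
  exact ((hqb.2.1 x).1 this).symm

theorem IsQuantumBinomial.r12_apply_eq_self_iff (hqb : IsQuantumBinomial r) (p : X × X × X) :
    r12 r p = p ↔ p.1 = p.2.1 := by
  rw [← hqb.apply_eq_self_iff (p.1, p.2.1)]
  simp [r12, Prod.ext_iff]

theorem IsQuantumBinomial.r23_apply_eq_self_iff (hqb : IsQuantumBinomial r) (p : X × X × X) :
    r23 r p = p ↔ p.2.1 = p.2.2 := by
  rw [← hqb.apply_eq_self_iff (p.2.1, p.2.2)]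
  simp [r23, Prod.ext_iff]

theorem involutive_r12 (h : Involutive r) : Involutive (r12 r) := by
  rintro ⟨x, y, z⟩
  simp [r12, h _]

theorem involutive_r23 (h : Involutive r) : Involutive (r23 r) := by
  rintro ⟨x, y, z⟩
  simp [r23, h _]

end QuantumBinomial

theorem typeII_eq_setOf_xor {X : Type*} :
    ((Diag2X ∪ XDiag2) \ Diag3 : Set (X × X × X)) =
      {p | Xor (p.1 = p.2.1) (p.2.1 = p.2.2)} := by
  ext p
  simp only [Diag2X, XDiag2, Diag3, Set.mem_sdiff, Set.mem_union, Set.mem_ofPred_eq, xor_def]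
  tauto

theorem ncard_typeII (X : Type*) [Fintype X] :
    ((Diag2X ∪ XDiag2) \ Diag3 : Set (X × X × X)).ncard =
      2 * (Fintype.card X * (Fintype.card X - 1)) := by
  rw [typeII_eq_setOf_xor, ncard_setOf_xor_diag]

theorem IsQuantumBinomial.typeII_eq_setOf_xor_fixed {X : Type*} {r : X × X → X × X}
    (hqb : IsQuantumBinomial r) :
    (Diag2X ∪ XDiag2) \ Diag3 = {p | Xor (r12 r p = p) (r23 r p = p)} := by
  simp only [typeII_eq_setOf_xor, hqb.r12_apply_eq_self_iff, hqb.r23_apply_eq_self_iff]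

/-- A finite quantum binomial set with |X| = n has exactly n(n-1) D-orbits of
type (ii), i.e. orbits meeting ((Δ₂ × X) ∪ (X × Δ₂)) \ Δ₃. -/
theorem card_typeII_orbits {X : Type*} [Fintype X]
    (r : X × X → X × X) (hqb : IsQuantumBinomial r) :
    {O : Set (X × X × X) | IsDOrbit r O ∧
        (O ∩ ((Diag2X ∪ XDiag2) \ Diag3)).Nonempty}.ncard
      = Fintype.card X * (Fintype.card X - 1) := by
  have htwo : ∀ a ∈ (Diag2X ∪ XDiag2) \ Diag3,
      {b | EqvGen (dStep r) a b ∧ b ∈ (Diag2X ∪ XDiag2) \ Diag3}.ncard = 2 := by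
    intro a ha
    rw [hqb.typeII_eq_setOf_xor_fixed] at ha ⊢
    exact ncard_eqvGen_genStep_xor_fixed (involutive_r12 hqb.1) (involutive_r23 hqb.1) ha
  have hcount := (EqvGen.is_equivalence (dStep r)).ncard_eq_mul_ncard_classes_inter
    (Set.toFinite _) htwo
  rw [ncard_typeII] at hcount
  exact (Nat.eq_of_mul_eq_mul_left two_pos hcount).symm
end

section
/- Let (X,r) be a finite quantum binomial set with |X| = n, and let q be the number of square-free D-orbits in X³. Then q = C(n,3) = n(n−1)(n−2)/6 if and only if (X,r) is a symmetric set, i.e. r satisfies the braid relation r¹² ∘ r²³ ∘ r¹² = r²³ ∘ r¹² ∘ r²³ on X³. -/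
namespace QBS

variable {X : Type*} {r : X × X → X × X}

/-- the D-orbit of a point -/
def orb (r : X × X → X × X) (p : X × X × X) : Set (X × X × X) :=
  {q | Relation.EqvGen (dStep r) p q}

/-- the "bad" set Δ₂×X ∪ X×Δ₂ -/
def Bd (X : Type*) : Set (X × X × X) := Diag2X ∪ XDiag2

/-- points whose orbit meets the bad set -/
def Sat (r : X × X → X × X) : Set (X × X × X) := {p | ∃ q ∈ orb r p, q ∈ Bd X}

lemma aa (hqb : IsQuantumBinomial r) : Function.Involutive (r12 r) := by
  intro p
  have h := hqb.1 (p.1, p.2.1)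
  simp [r12, h]

lemma bb (hqb : IsQuantumBinomial r) : Function.Involutive (r23 r) := by
  intro p
  have h := hqb.1 (p.2.1, p.2.2)
  simp [r23, h]

lemma lam_fix (hqb : IsQuantumBinomial r) {x y : X} (h : (r (x, y)).1 = x) : y = x :=
  (hqb.2.1 x).injective (by simpa [hqb.2.2.2 x] using h)

lemma rho_fix (hqb : IsQuantumBinomial r) {x y : X} (h : (r (y, x)).2 = x) : y = x :=
  (hqb.2.2.1 x).injective (by simpa [hqb.2.2.2 x] using h)

lemma diag_fix (hqb : IsQuantumBinomial r) {u : X × X} (h : (r u).1 = (r u).2) :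
    u.1 = u.2 := by
  have h1 : r u = ((r u).2, (r u).2) := Prod.ext h rfl
  have h2 : u = ((r u).2, (r u).2) := by
    calc u = r (r u) := (hqb.1 u).symm
    _ = r ((r u).2, (r u).2) := by rw [← h1]
    _ = ((r u).2, (r u).2) := hqb.2.2.2 _
  rw [h2]

lemma fix_a_of (hqb : IsQuantumBinomial r) {p : X × X × X} (h : p.1 = p.2.1) :
    r12 r p = p := by
  obtain ⟨x, y, z⟩ := p
  simp only at h
  subst h
  simp [r12, hqb.2.2.2 x]

lemma fix_b_of (hqb : IsQuantumBinomial r) {p : X × X × X} (h : p.2.1 = p.2.2) :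
    r23 r p = p := by
  obtain ⟨x, y, z⟩ := p
  simp only at h
  subst h
  simp [r23, hqb.2.2.2 y]

lemma fix_a_iff (hqb : IsQuantumBinomial r) {p : X × X × X} :
    r12 r p = p ↔ p.1 = p.2.1 := by
  refine ⟨fun h => ?_, fix_a_of hqb⟩
  have h1 : (r (p.1, p.2.1)).1 = p.1 := congrArg Prod.fst h
  exact (lam_fix hqb h1).symm

lemma fix_b_iff (hqb : IsQuantumBinomial r) {p : X × X × X} :
    r23 r p = p ↔ p.2.1 = p.2.2 := by
  refine ⟨fun h => ?_, fix_b_of hqb⟩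
  have h1 : (r (p.2.1, p.2.2)).2 = p.2.2 := congrArg (fun q => q.2.2) h
  exact rho_fix hqb h1

lemma ne_ab (hqb : IsQuantumBinomial r) {p : X × X × X} (h : p.1 ≠ p.2.1) :
    r12 r p ≠ r23 r p := by
  intro he
  have h1 : (r (p.1, p.2.1)).1 = p.1 := congrArg Prod.fst he
  exact h (lam_fix hqb h1).symm

lemma ne_abba (hqb : IsQuantumBinomial r) {p : X × X × X} (h : p.2.1 ≠ p.2.2) :
    r12 r (r23 r p) ≠ r23 r (r12 r p) := by
  intro he
  have h1 := congrArg Prod.fst he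
  simp only [r12, r23] at h1
  have h2 : (r (p.2.1, p.2.2)).1 = p.2.1 := (hqb.2.1 p.1).injective h1
  exact h (lam_fix hqb h2).symm

lemma mem_orb_self (r : X × X → X × X) (p : X × X × X) : p ∈ orb r p :=
  Relation.EqvGen.refl p

lemma orb_mem_a {p q : X × X × X} (h : q ∈ orb r p) : r12 r q ∈ orb r p :=
  Relation.EqvGen.trans _ _ _ h (Relation.EqvGen.rel _ _ (Or.inl rfl))

lemma orb_mem_b {p q : X × X × X} (h : q ∈ orb r p) : r23 r q ∈ orb r p :=
  Relation.EqvGen.trans _ _ _ h (Relation.EqvGen.rel _ _ (Or.inr rfl))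

lemma orb_eq {p q : X × X × X} (h : q ∈ orb r p) : orb r p = orb r q := by
  ext w
  exact ⟨fun hw => Relation.EqvGen.trans _ _ _ (Relation.EqvGen.symm _ _ h) hw,
    fun hw => Relation.EqvGen.trans _ _ _ h hw⟩

lemma orb_subset (hqb : IsQuantumBinomial r) {p : X × X × X} {T : Set (X × X × X)}
    (hA : ∀ q ∈ T, r12 r q ∈ T) (hB : ∀ q ∈ T, r23 r q ∈ T) (hp : p ∈ T) :
    orb r p ⊆ T := by
  have key : ∀ x y : X × X × X, Relation.EqvGen (dStep r) x y → (x ∈ T ↔ y ∈ T) := by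
    intro x y h
    induction h with
    | rel x y hxy =>
      rcases hxy with h | h
      · subst h
        exact ⟨fun hx => hA _ hx, fun hy => by
          have := hA _ hy
          rwa [aa hqb x] at this⟩
      · subst h
        exact ⟨fun hx => hB _ hx, fun hy => by
          have := hB _ hy
          rwa [bb hqb x] at this⟩
    | refl => exact Iff.rfl
    | symm _ _ _ ih => exact ih.symm
    | trans _ _ _ _ _ ih1 ih2 => exact ih1.trans ih2
  exact fun q hq => (key p q hq).mp hp

lemma sat_congr {p q : X × X × X} (h : q ∈ orb r p) : p ∈ Sat r ↔ q ∈ Sat r := by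
  simp only [Sat, Set.mem_setOf_eq, orb_eq h]

lemma good_a {p : X × X × X} (hqb : IsQuantumBinomial r) (hp : p ∉ Sat r) :
    r12 r p ∉ Sat r := fun h => hp ((sat_congr (orb_mem_a (mem_orb_self r p))).mpr h)

lemma good_b {p : X × X × X} (hqb : IsQuantumBinomial r) (hp : p ∉ Sat r) :
    r23 r p ∉ Sat r := fun h => hp ((sat_congr (orb_mem_b (mem_orb_self r p))).mpr h)

lemma good1 {p : X × X × X} (hp : p ∉ Sat r) : p.1 ≠ p.2.1 :=
  fun h => hp ⟨p, mem_orb_self r p, Or.inl h⟩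

lemma good2 {p : X × X × X} (hp : p ∉ Sat r) : p.2.1 ≠ p.2.2 :=
  fun h => hp ⟨p, mem_orb_self r p, Or.inr h⟩

lemma nfa (hqb : IsQuantumBinomial r) {p : X × X × X} (hp : p ∉ Sat r) :
    r12 r p ≠ p := fun h => good1 hp ((fix_a_iff hqb).mp h)

lemma nfb (hqb : IsQuantumBinomial r) {p : X × X × X} (hp : p ∉ Sat r) :
    r23 r p ≠ p := fun h => good2 hp ((fix_b_iff hqb).mp h)

lemma nab (hqb : IsQuantumBinomial r) {p : X × X × X} (hp : p ∉ Sat r) :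
    r12 r p ≠ r23 r p := ne_ab hqb (good1 hp)

/-- the six standard elements of a square-free orbit -/
def T6 (r : X × X → X × X) (p : X × X × X) : Set (X × X × X) :=
  insert p (insert (r12 r p) (insert (r23 r p) (insert (r12 r (r23 r p))
    (insert (r23 r (r12 r p)) {r12 r (r23 r (r12 r p))}))))

lemma T6_subset_orb (r : X × X → X × X) (p : X × X × X) : T6 r p ⊆ orb r p := by
  intro q hq
  simp only [T6, Set.mem_insert_iff, Set.mem_singleton_iff] at hq
  rcases hq with h | h | h | h | h | h <;> rw [h]
  · exact mem_orb_self r p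
  · exact orb_mem_a (mem_orb_self r p)
  · exact orb_mem_b (mem_orb_self r p)
  · exact orb_mem_a (orb_mem_b (mem_orb_self r p))
  · exact orb_mem_b (orb_mem_a (mem_orb_self r p))
  · exact orb_mem_a (orb_mem_b (orb_mem_a (mem_orb_self r p)))

section Distinct

variable (hqb : IsQuantumBinomial r) {p : X × X × X} (hp : p ∉ Sat r)

include hqb hp

lemma d12 : p ≠ r12 r p := (nfa hqb hp).symm
lemma d13 : p ≠ r23 r p := (nfb hqb hp).symm
lemma d23 : r12 r p ≠ r23 r p := nab hqb hp
lemma d14 : p ≠ r12 r (r23 r p) := fun h =>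
  nab hqb hp ((congrArg (r12 r) h).trans (aa hqb _))
lemma d24 : r12 r p ≠ r12 r (r23 r p) := fun h =>
  d13 hqb hp ((aa hqb).injective h)
lemma d34 : r23 r p ≠ r12 r (r23 r p) := (nfa hqb (good_b hqb hp)).symm
lemma d15 : p ≠ r23 r (r12 r p) := fun h =>
  nab hqb hp ((congrArg (r23 r) h).trans (bb hqb _)).symm
lemma d25 : r12 r p ≠ r23 r (r12 r p) := (nfb hqb (good_a hqb hp)).symm
lemma d35 : r23 r p ≠ r23 r (r12 r p) := fun h =>
  d12 hqb hp ((bb hqb).injective h)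
lemma d45 : r12 r (r23 r p) ≠ r23 r (r12 r p) := ne_abba hqb (good2 hp)
lemma d16 : p ≠ r12 r (r23 r (r12 r p)) := fun h =>
  d25 hqb hp ((congrArg (r12 r) h).trans (aa hqb _))
lemma d26 : r12 r p ≠ r12 r (r23 r (r12 r p)) := fun h =>
  d15 hqb hp ((aa hqb).injective h)
lemma d36 : r23 r p ≠ r12 r (r23 r (r12 r p)) := fun h =>
  d45 hqb hp ((congrArg (r12 r) h).trans (aa hqb _))
lemma d46 : r12 r (r23 r p) ≠ r12 r (r23 r (r12 r p)) := fun h =>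
  d35 hqb hp ((aa hqb).injective h)
lemma d56 : r23 r (r12 r p) ≠ r12 r (r23 r (r12 r p)) :=
  (nfa hqb ((sat_congr (orb_mem_b (orb_mem_a (mem_orb_self r p)))).not.mp hp)).symm

end Distinct

lemma T6_ncard [Finite X] (hqb : IsQuantumBinomial r) {p : X × X × X}
    (hp : p ∉ Sat r) : (T6 r p).ncard = 6 := by
  have h1 : p ∉ (insert (r12 r p) (insert (r23 r p) (insert (r12 r (r23 r p))
      (insert (r23 r (r12 r p)) {r12 r (r23 r (r12 r p))}))) : Set (X × X × X)) := by
    simp only [Set.mem_insert_iff, Set.mem_singleton_iff, not_or]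
    exact ⟨d12 hqb hp, d13 hqb hp, d14 hqb hp, d15 hqb hp, d16 hqb hp⟩
  have h2 : r12 r p ∉ (insert (r23 r p) (insert (r12 r (r23 r p))
      (insert (r23 r (r12 r p)) {r12 r (r23 r (r12 r p))})) : Set (X × X × X)) := by
    simp only [Set.mem_insert_iff, Set.mem_singleton_iff, not_or]
    exact ⟨d23 hqb hp, d24 hqb hp, d25 hqb hp, d26 hqb hp⟩
  have h3 : r23 r p ∉ (insert (r12 r (r23 r p))
      (insert (r23 r (r12 r p)) {r12 r (r23 r (r12 r p))}) : Set (X × X × X)) := by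
    simp only [Set.mem_insert_iff, Set.mem_singleton_iff, not_or]
    exact ⟨d34 hqb hp, d35 hqb hp, d36 hqb hp⟩
  have h4 : r12 r (r23 r p) ∉ (insert (r23 r (r12 r p)) {r12 r (r23 r (r12 r p))} : Set (X × X × X)) := by
    simp only [Set.mem_insert_iff, Set.mem_singleton_iff, not_or]
    exact ⟨d45 hqb hp, d46 hqb hp⟩
  have h5 : r23 r (r12 r p) ∉ ({r12 r (r23 r (r12 r p))} : Set (X × X × X)) := by
    simp only [Set.mem_singleton_iff]
    exact d56 hqb hp
  rw [T6, Set.ncard_insert_of_notMem h1, Set.ncard_insert_of_notMem h2,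
    Set.ncard_insert_of_notMem h3, Set.ncard_insert_of_notMem h4,
    Set.ncard_insert_of_notMem h5, Set.ncard_singleton]

section Fiber

variable {α γ : Type*} [Finite α]

lemma fiber_sum (f : α → γ) (S : Set α) :
    ∃ t : Finset γ, (↑t = f '' S) ∧ S.ncard = ∑ b ∈ t, (S ∩ f ⁻¹' {b}).ncard := by
  classical
  have hS : S.Finite := S.toFinite
  have hI : (f '' S).Finite := (f '' S).toFinite
  refine ⟨hI.toFinset, hI.coe_toFinset, ?_⟩
  have hmem : ∀ x ∈ hS.toFinset, f x ∈ hI.toFinset := by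
    intro x hx
    rw [Set.Finite.mem_toFinset] at hx ⊢
    exact Set.mem_image_of_mem f hx
  have hcard := Finset.card_eq_sum_card_fiberwise hmem
  rw [Set.ncard_eq_toFinset_card S hS, hcard]
  refine Finset.sum_congr rfl fun b _ => ?_
  have : ↑(hS.toFinset.filter fun a => f a = b) = S ∩ f ⁻¹' {b} := by
    ext x
    simp [Set.Finite.mem_toFinset]
  rw [← this, Set.ncard_coe_finset]

lemma fiber_eq (f : α → γ) (S : Set α) (k : ℕ)
    (h : ∀ p ∈ S, (S ∩ f ⁻¹' {f p}).ncard = k) :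
    S.ncard = k * (f '' S).ncard := by
  obtain ⟨t, ht, hsum⟩ := fiber_sum f S
  have : ∀ b ∈ t, (S ∩ f ⁻¹' {b}).ncard = k := by
    intro b hb
    rw [← Finset.mem_coe, ht] at hb
    obtain ⟨p, hp, rfl⟩ := hb
    exact h p hp
  rw [hsum, Finset.sum_congr rfl this, Finset.sum_const, smul_eq_mul, ← ht,
    Set.ncard_coe_finset, mul_comm]

lemma fiber_le (f : α → γ) (S : Set α) (k : ℕ)
    (h : ∀ p ∈ S, k ≤ (S ∩ f ⁻¹' {f p}).ncard) :
    k * (f '' S).ncard ≤ S.ncard := by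
  obtain ⟨t, ht, hsum⟩ := fiber_sum f S
  have hb : ∀ b ∈ t, k ≤ (S ∩ f ⁻¹' {b}).ncard := by
    intro b hb
    rw [← Finset.mem_coe, ht] at hb
    obtain ⟨p, hp, rfl⟩ := hb
    exact h p hp
  calc k * (f '' S).ncard = t.card • k := by
        rw [← ht, Set.ncard_coe_finset, smul_eq_mul, mul_comm]
  _ ≤ ∑ b ∈ t, (S ∩ f ⁻¹' {b}).ncard := Finset.card_nsmul_le_sum t _ k hb
  _ = S.ncard := hsum.symm

lemma fiber_rigid (f : α → γ) (S : Set α) (k : ℕ)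
    (h : ∀ p ∈ S, k ≤ (S ∩ f ⁻¹' {f p}).ncard)
    (heq : S.ncard = k * (f '' S).ncard) :
    ∀ p ∈ S, (S ∩ f ⁻¹' {f p}).ncard = k := by
  obtain ⟨t, ht, hsum⟩ := fiber_sum f S
  have hb : ∀ b ∈ t, k ≤ (S ∩ f ⁻¹' {b}).ncard := by
    intro b hb
    rw [← Finset.mem_coe, ht] at hb
    obtain ⟨p, hp, rfl⟩ := hb
    exact h p hp
  have htot : ∑ b ∈ t, k = ∑ b ∈ t, (S ∩ f ⁻¹' {b}).ncard := by
    rw [← hsum, heq, Finset.sum_const, smul_eq_mul, ← ht, Set.ncard_coe_finset,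
      mul_comm]
  have hall := (Finset.sum_eq_sum_iff_of_le hb).mp htot
  intro p hp
  have : f p ∈ t := by
    rw [← Finset.mem_coe, ht]
    exact Set.mem_image_of_mem f hp
  exact (hall _ this).symm

end Fiber

lemma aux_choose2 (n : ℕ) : 2 * Nat.choose n 2 + n = n ^ 2 := by
  induction n with
  | zero => rfl
  | succ k ih =>
    have h : (k + 1).choose 2 = k.choose 1 + k.choose 2 := Nat.choose_succ_succ k 1
    have h2 : (k + 1) ^ 2 = k ^ 2 + 2 * k + 1 := by ring
    rw [h, Nat.choose_one_right, h2]
    linarith [ih]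

lemma aux_choose3 (n : ℕ) : 6 * Nat.choose n 3 + 3 * n ^ 2 = n ^ 3 + 2 * n := by
  induction n with
  | zero => rfl
  | succ k ih =>
    have h : (k + 1).choose 3 = k.choose 2 + k.choose 3 := Nat.choose_succ_succ k 2
    have h2 : (k + 1) ^ 2 = k ^ 2 + 2 * k + 1 := by ring
    have h3 : (k + 1) ^ 3 = k ^ 3 + 3 * k ^ 2 + 3 * k + 1 := by ring
    rw [h, h2, h3]
    linarith [ih, aux_choose2 k]

section Cards

variable (X : Type*) [Fintype X]

lemma ncard_D2 : (Diag2X : Set (X × X × X)).ncard = Fintype.card X * Fintype.card X := by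
  have he : (Diag2X : Set (X × X × X)) = (fun u : X × X => (u.1, u.1, u.2)) '' Set.univ := by
    ext ⟨x, y, z⟩
    simp only [Diag2X, Set.mem_setOf_eq, Set.image_univ, Set.mem_range, Prod.mk.injEq]
    constructor
    · intro h
      exact ⟨(x, z), rfl, h, rfl⟩
    · rintro ⟨⟨u, v⟩, h1, h2, h3⟩
      simp only at h1 h2 h3
      rw [← h1, ← h2]
  have hinj : Function.Injective (fun u : X × X => (u.1, u.1, u.2)) := by
    intro ⟨a, b⟩ ⟨c, d⟩ h
    simp only [Prod.mk.injEq] at h ⊢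
    exact ⟨h.1, h.2.2⟩
  rw [he, Set.ncard_image_of_injective _ hinj, Set.ncard_univ, Nat.card_eq_fintype_card,
    Fintype.card_prod]

lemma ncard_XD2 : (XDiag2 : Set (X × X × X)).ncard = Fintype.card X * Fintype.card X := by
  have he : (XDiag2 : Set (X × X × X)) = (fun u : X × X => (u.1, u.2, u.2)) '' Set.univ := by
    ext ⟨x, y, z⟩
    simp only [XDiag2, Set.mem_setOf_eq, Set.image_univ, Set.mem_range, Prod.mk.injEq]
    constructor
    · intro h
      exact ⟨(x, y), rfl, rfl, h⟩
    · rintro ⟨⟨u, v⟩, h1, h2, h3⟩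
      simp only at h1 h2 h3
      rw [← h2, ← h3]
  have hinj : Function.Injective (fun u : X × X => (u.1, u.2, u.2)) := by
    intro ⟨a, b⟩ ⟨c, d⟩ h
    simp only [Prod.mk.injEq] at h ⊢
    exact ⟨h.1, h.2.1⟩
  rw [he, Set.ncard_image_of_injective _ hinj, Set.ncard_univ, Nat.card_eq_fintype_card,
    Fintype.card_prod]

lemma ncard_D2_inter : ((Diag2X ∩ XDiag2 : Set (X × X × X))).ncard = Fintype.card X := by
  have he : (Diag2X ∩ XDiag2 : Set (X × X × X)) = (fun x : X => (x, x, x)) '' Set.univ := by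
    ext ⟨x, y, z⟩
    simp only [Diag2X, XDiag2, Set.mem_inter_iff, Set.mem_setOf_eq, Set.image_univ,
      Set.mem_range, Prod.mk.injEq]
    constructor
    · rintro ⟨h1, h2⟩
      exact ⟨x, rfl, h1, h1.trans h2⟩
    · rintro ⟨u, h1, h2, h3⟩
      rw [← h1, ← h2, ← h3]
      exact ⟨rfl, rfl⟩
  have hinj : Function.Injective (fun x : X => (x, x, x)) := by
    intro a b h
    simpa using congrArg Prod.fst h
  rw [he, Set.ncard_image_of_injective _ hinj, Set.ncard_univ, Nat.card_eq_fintype_card]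

lemma ncard_univ3 : (Set.univ : Set (X × X × X)).ncard = Fintype.card X ^ 3 := by
  rw [Set.ncard_univ, Nat.card_eq_fintype_card, Fintype.card_prod, Fintype.card_prod]
  ring

end Cards

variable {X : Type*} {r : X × X → X × X}

lemma f_not_bd (hqb : IsQuantumBinomial r) {p : X × X × X}
    (hp : p ∈ (Diag2X \ XDiag2 : Set (X × X × X))) : r23 r p ∉ Bd X := by
  obtain ⟨h1, h2⟩ := hp
  simp only [Diag2X, Set.mem_setOf_eq] at h1
  simp only [XDiag2, Set.mem_setOf_eq] at h2
  rintro (h | h)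
  · simp only [Diag2X, r23, Set.mem_setOf_eq] at h
    rw [h1] at h
    exact h2 (lam_fix hqb h.symm).symm
  · simp only [XDiag2, r23, Set.mem_setOf_eq] at h
    exact h2 (diag_fix hqb h)

lemma g_not_bd (hqb : IsQuantumBinomial r) {p : X × X × X}
    (hp : p ∈ (XDiag2 \ Diag2X : Set (X × X × X))) : r12 r p ∉ Bd X := by
  obtain ⟨h1, h2⟩ := hp
  simp only [XDiag2, Set.mem_setOf_eq] at h1
  simp only [Diag2X, Set.mem_setOf_eq] at h2
  rintro (h | h)
  · simp only [Diag2X, r12, Set.mem_setOf_eq] at h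
    exact h2 (diag_fix hqb h)
  · simp only [XDiag2, r12, Set.mem_setOf_eq] at h
    rw [← h1] at h
    exact h2 (rho_fix hqb h)

lemma fIm_sub_sat {p : X × X × X} (hqb : IsQuantumBinomial r)
    (hp : p ∈ (Diag2X : Set (X × X × X))) : r23 r p ∈ Sat r := by
  refine ⟨p, ?_, Or.inl hp⟩
  have : r23 r (r23 r p) ∈ orb r (r23 r p) := orb_mem_b (mem_orb_self r _)
  rwa [bb hqb p] at this

lemma gIm_sub_sat {p : X × X × X} (hqb : IsQuantumBinomial r)
    (hp : p ∈ (XDiag2 : Set (X × X × X))) : r12 r p ∈ Sat r := by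
  refine ⟨p, ?_, Or.inr hp⟩
  have : r12 r (r12 r p) ∈ orb r (r12 r p) := orb_mem_a (mem_orb_self r _)
  rwa [aa hqb p] at this

/-- the fiber of the orbit map over a square-free point is its orbit -/
lemma fiber_set {p : X × X × X} (hp : p ∉ Sat r) :
    (Sat r)ᶜ ∩ orb r ⁻¹' {orb r p} = orb r p := by
  ext q
  simp only [Set.mem_inter_iff, Set.mem_compl_iff, Set.mem_preimage,
    Set.mem_singleton_iff]
  constructor
  · rintro ⟨-, h⟩
    rw [← h]
    exact mem_orb_self r q
  · intro hq
    exact ⟨fun hs => hp ((sat_congr hq).mpr hs), (orb_eq hq).symm⟩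

/-- the set of square-free orbits is the image of the good set under the orbit map -/
lemma orbset_eq :
    {O : Set (X × X × X) | IsDOrbit r O ∧ O ∩ (Diag2X ∪ XDiag2) = ∅}
      = orb r '' (Sat r)ᶜ := by
  ext O
  simp only [Set.mem_setOf_eq, Set.mem_image, Set.mem_compl_iff]
  constructor
  · rintro ⟨⟨p, rfl⟩, hdisj⟩
    refine ⟨p, fun hs => ?_, rfl⟩
    obtain ⟨q, hq, hqB⟩ := hs
    exact (Set.eq_empty_iff_forall_notMem.mp hdisj q) ⟨hq, hqB⟩
  · rintro ⟨p, hp, rfl⟩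
    refine ⟨⟨p, rfl⟩, Set.eq_empty_iff_forall_notMem.mpr fun q ⟨hq, hqB⟩ => ?_⟩
    exact hp ⟨q, hq, hqB⟩


lemma braid_pointwise (hbr : IsBraided r) :
    ∀ p, r12 r (r23 r (r12 r p)) = r23 r (r12 r (r23 r p)) := by
  intro p
  have := congrFun hbr p
  simpa [Function.comp] using this

lemma braided_key (hqb : IsQuantumBinomial r)
    (hbrp : ∀ p, r12 r (r23 r (r12 r p)) = r23 r (r12 r (r23 r p)))
    (p : X × X × X) : r23 r (r12 r (r23 r (r12 r p))) = r12 r (r23 r p) := by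
  have h := hbrp (r12 r p)
  rw [aa hqb p] at h
  exact h.symm

lemma braided_orb_eq (hqb : IsQuantumBinomial r)
    (hbrp : ∀ p, r12 r (r23 r (r12 r p)) = r23 r (r12 r (r23 r p)))
    (p : X × X × X) : orb r p = T6 r p := by
  refine Set.Subset.antisymm ?_ (T6_subset_orb r p)
  refine orb_subset hqb ?_ ?_ ?_
  · intro q hq
    simp only [T6, Set.mem_insert_iff, Set.mem_singleton_iff] at hq ⊢
    rcases hq with h | h | h | h | h | h <;> rw [h]
    · tauto
    · rw [aa hqb p]; tauto
    · tauto
    · rw [aa hqb (r23 r p)]; tauto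
    · tauto
    · rw [aa hqb (r23 r (r12 r p))]; tauto
  · intro q hq
    simp only [T6, Set.mem_insert_iff, Set.mem_singleton_iff] at hq ⊢
    rcases hq with h | h | h | h | h | h <;> rw [h]
    · tauto
    · tauto
    · rw [bb hqb p]; tauto
    · rw [← hbrp p]; tauto
    · rw [bb hqb (r12 r p)]; tauto
    · rw [braided_key hqb hbrp p]; tauto
  · simp only [T6, Set.mem_insert_iff]; tauto

lemma braided_sat (hqb : IsQuantumBinomial r)
    (hbrp : ∀ p, r12 r (r23 r (r12 r p)) = r23 r (r12 r (r23 r p))) :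
    Sat r = Bd X ∪ r23 r '' (Diag2X \ XDiag2) := by
  ext p
  constructor
  · rintro ⟨w, hw, hwB⟩
    have hpw : p ∈ orb r w := by
      rw [← orb_eq hw]
      exact mem_orb_self r p
    by_cases hD : w ∈ (Diag2X : Set (X × X × X)) <;>
      by_cases hX : w ∈ (XDiag2 : Set (X × X × X))
    · have hsub : orb r w ⊆ {w} := by
        refine orb_subset hqb ?_ ?_ rfl
        · rintro q rfl
          exact fix_a_of hqb hD
        · rintro q rfl
          exact fix_b_of hqb hX
      have := hsub hpw
      rw [Set.mem_singleton_iff] at this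
      subst this
      exact Or.inl hwB
    · -- w ∈ Diag2X \ XDiag2
      have hfixw : r12 r w = w := fix_a_of hqb hD
      have hfix2 : r23 r (r12 r (r23 r w)) = r12 r (r23 r w) := by
        have h := hbrp w
        rw [hfixw] at h
        exact h.symm
      have hsub : orb r w ⊆ {w, r23 r w, r12 r (r23 r w)} := by
        refine orb_subset hqb ?_ ?_ (by tauto)
        · intro q hq
          simp only [Set.mem_insert_iff, Set.mem_singleton_iff] at hq ⊢
          rcases hq with h | h | h <;> rw [h]
          · rw [hfixw]; tauto
          · tauto
          · rw [aa hqb (r23 r w)]; tauto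
        · intro q hq
          simp only [Set.mem_insert_iff, Set.mem_singleton_iff] at hq ⊢
          rcases hq with h | h | h <;> rw [h]
          · tauto
          · rw [bb hqb w]; tauto
          · rw [hfix2]; tauto
      have hmem := hsub hpw
      simp only [Set.mem_insert_iff, Set.mem_singleton_iff] at hmem
      rcases hmem with h | h | h
      · subst h; exact Or.inl hwB
      · subst h; exact Or.inr ⟨w, ⟨hD, hX⟩, rfl⟩
      · subst h
        exact Or.inl (Or.inr ((fix_b_iff hqb).mp hfix2))
    · -- w ∈ XDiag2 \ Diag2X
      have hfixw : r23 r w = w := fix_b_of hqb hX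
      have hfix2 : r12 r (r23 r (r12 r w)) = r23 r (r12 r w) := by
        have h := hbrp w
        rwa [hfixw] at h
      have hsub : orb r w ⊆ {w, r12 r w, r23 r (r12 r w)} := by
        refine orb_subset hqb ?_ ?_ (by tauto)
        · intro q hq
          simp only [Set.mem_insert_iff, Set.mem_singleton_iff] at hq ⊢
          rcases hq with h | h | h <;> rw [h]
          · tauto
          · rw [aa hqb w]; tauto
          · rw [hfix2]; tauto
        · intro q hq
          simp only [Set.mem_insert_iff, Set.mem_singleton_iff] at hq ⊢
          rcases hq with h | h | h <;> rw [h]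
          · rw [hfixw]; tauto
          · tauto
          · rw [bb hqb (r12 r w)]; tauto
      have hmem := hsub hpw
      simp only [Set.mem_insert_iff, Set.mem_singleton_iff] at hmem
      rcases hmem with h | h | h
      · subst h; exact Or.inl hwB
      · -- p = r12 r w ∈ fIm  (case marker A)
        subst h
        have hD2 : r23 r (r12 r w) ∈ (Diag2X : Set (X × X × X)) :=
          (fix_a_iff hqb).mp hfix2
        have hnX : r23 r (r12 r w) ∉ (XDiag2 : Set (X × X × X)) := by
          intro hXX
          have hbw : r23 r (r23 r (r12 r w)) = r23 r (r12 r w) := fix_b_of hqb hXX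
          rw [bb hqb (r12 r w)] at hbw
          have : r12 r w ∈ Bd X := by
            rw [hbw]
            exact Or.inl hD2
          exact g_not_bd hqb ⟨hX, hD⟩ this
        refine Or.inr ⟨r23 r (r12 r w), ⟨hD2, hnX⟩, ?_⟩
        rw [bb hqb (r12 r w)]
      · subst h
        exact Or.inl (Or.inl ((fix_a_iff hqb).mp hfix2))
    · rcases hwB with h | h
      · exact absurd h hD
      · exact absurd h hX
  · rintro (h | ⟨w, hw, rfl⟩)
    · exact ⟨p, mem_orb_self r p, h⟩
    · exact fIm_sub_sat hqb hw.1

section Main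

variable [Fintype X]

lemma card_eqns (hqb : IsQuantumBinomial r) :
    ((Bd X).ncard + Fintype.card X = 2 * (Fintype.card X * Fintype.card X)) ∧
    ((r23 r '' (Diag2X \ XDiag2)).ncard + Fintype.card X
        = Fintype.card X * Fintype.card X) ∧
    ((r12 r '' (XDiag2 \ Diag2X)).ncard + Fintype.card X
        = Fintype.card X * Fintype.card X) ∧
    ((Sat r).ncard + (Sat r)ᶜ.ncard = Fintype.card X ^ 3) := by
  refine ⟨?_, ?_, ?_, ?_⟩
  · have h := Set.ncard_union_add_ncard_inter (Diag2X : Set (X × X × X)) XDiag2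
    rw [ncard_D2, ncard_XD2, ncard_D2_inter] at h
    have : Bd X = Diag2X ∪ XDiag2 := rfl
    rw [this, h]
    ring
  · rw [Set.ncard_image_of_injective _ (bb hqb).injective]
    have h := Set.ncard_inter_add_ncard_diff_eq_ncard (Diag2X : Set (X × X × X)) XDiag2
    rw [ncard_D2, ncard_D2_inter] at h
    omega
  · rw [Set.ncard_image_of_injective _ (aa hqb).injective]
    have h := Set.ncard_inter_add_ncard_diff_eq_ncard (XDiag2 : Set (X × X × X)) Diag2X
    rw [ncard_XD2, Set.inter_comm, ncard_D2_inter] at h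
    omega
  · rw [Set.ncard_add_ncard_compl, ← Set.ncard_univ, ncard_univ3]

lemma forward_count (hqb : IsQuantumBinomial r) (hbr : IsBraided r) :
    {O : Set (X × X × X) | IsDOrbit r O ∧ O ∩ (Diag2X ∪ XDiag2) = ∅}.ncard
      = (Fintype.card X).choose 3 := by
  set n := Fintype.card X with hn
  have hbrp := braid_pointwise hbr
  obtain ⟨hBd, hf, -, hcompl⟩ := card_eqns hqb
  have hfib : ∀ p ∈ (Sat r)ᶜ, ((Sat r)ᶜ ∩ orb r ⁻¹' {orb r p}).ncard = 6 := by
    intro p hp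
    rw [fiber_set hp, braided_orb_eq hqb hbrp p]
    exact T6_ncard hqb hp
  have hcount := fiber_eq (orb r) (Sat r)ᶜ 6 hfib
  have hdis : Disjoint (Bd X) (r23 r '' (Diag2X \ XDiag2)) := by
    rw [Set.disjoint_right]
    rintro q ⟨w, hw, rfl⟩
    exact f_not_bd hqb hw
  have hsatcard : (Sat r).ncard
      = (Bd X).ncard + (r23 r '' (Diag2X \ XDiag2)).ncard := by
    rw [braided_sat hqb hbrp, Set.ncard_union_eq hdis]
  rw [orbset_eq]
  have haux := aux_choose3 n
  have hsq : n ^ 2 = n * n := pow_two n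
  rw [hcount] at hcompl
  linarith [hcompl, hsatcard, hBd, hf, haux, hsq]


lemma converse_braided (hqb : IsQuantumBinomial r)
    (hq : {O : Set (X × X × X) | IsDOrbit r O ∧ O ∩ (Diag2X ∪ XDiag2) = ∅}.ncard
      = (Fintype.card X).choose 3) : IsBraided r := by
  set n := Fintype.card X with hn
  obtain ⟨hBd, hf, hg, hcompl⟩ := card_eqns hqb
  rw [orbset_eq] at hq
  -- each fibre of the orbit map on the good part has at least 6 elements
  have hfib : ∀ p ∈ (Sat r)ᶜ, 6 ≤ ((Sat r)ᶜ ∩ orb r ⁻¹' {orb r p}).ncard := by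
    intro p hp
    rw [fiber_set hp]
    calc 6 = (T6 r p).ncard := (T6_ncard hqb hp).symm
    _ ≤ (orb r p).ncard := Set.ncard_le_ncard (T6_subset_orb r p) (Set.toFinite _)
  have hle := fiber_le (orb r) (Sat r)ᶜ 6 hfib
  -- lower bound on the saturation
  have hsub1 : Bd X ∪ r23 r '' (Diag2X \ XDiag2) ⊆ Sat r := by
    rintro p (h | ⟨w, hw, rfl⟩)
    · exact ⟨p, mem_orb_self r p, h⟩
    · exact fIm_sub_sat hqb hw.1
  have hdis : Disjoint (Bd X) (r23 r '' (Diag2X \ XDiag2)) := by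
    rw [Set.disjoint_right]
    rintro q ⟨w, hw, rfl⟩
    exact f_not_bd hqb hw
  have hBfcard : (Bd X ∪ r23 r '' (Diag2X \ XDiag2)).ncard
      = (Bd X).ncard + (r23 r '' (Diag2X \ XDiag2)).ncard :=
    Set.ncard_union_eq hdis
  have hsub1le := Set.ncard_le_ncard hsub1 (Set.toFinite _)
  have haux := aux_choose3 n
  have hsq : n ^ 2 = n * n := pow_two n
  rw [hq] at hle
  -- forced equalities
  have hsatle : (Sat r).ncard ≤ (Bd X ∪ r23 r '' (Diag2X \ XDiag2)).ncard := by
    linarith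
  have hSatEq : Bd X ∪ r23 r '' (Diag2X \ XDiag2) = Sat r :=
    Set.eq_of_subset_of_ncard_le hsub1 hsatle (Set.toFinite _)
  have hscEq : (Sat r)ᶜ.ncard = 6 * (orb r '' (Sat r)ᶜ).ncard := by
    rw [hq]
    linarith
  -- gIm = fIm
  have hsubgf : r12 r '' (XDiag2 \ Diag2X) ⊆ r23 r '' (Diag2X \ XDiag2) := by
    rintro q ⟨w, hw, rfl⟩
    have hsat : r12 r w ∈ Sat r := gIm_sub_sat hqb hw.1
    rw [← hSatEq] at hsat
    rcases hsat with h | h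
    · exact absurd h (g_not_bd hqb hw)
    · exact h
  have hfg : r12 r '' (XDiag2 \ Diag2X) = r23 r '' (Diag2X \ XDiag2) :=
    Set.eq_of_subset_of_ncard_le hsubgf (by omega) (Set.toFinite _)
  -- rigidity: all good orbits have exactly six elements
  have hrig := fiber_rigid (orb r) (Sat r)ᶜ 6 hfib hscEq
  have horb6 : ∀ p ∉ Sat r, orb r p = T6 r p := by
    intro p hp
    refine (Set.eq_of_subset_of_ncard_le (T6_subset_orb r p) ?_ (Set.toFinite _)).symm
    have h := hrig p hp
    rw [fiber_set hp] at h
    rw [h, T6_ncard hqb hp]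
  -- the key identity on square-free points
  have keyI : ∀ p, p ∉ Sat r →
      r23 r (r12 r (r23 r (r12 r p))) = r12 r (r23 r p) := by
    intro p hp
    have hmem : r23 r (r12 r (r23 r (r12 r p))) ∈ orb r p :=
      orb_mem_b (orb_mem_a (orb_mem_b (orb_mem_a (mem_orb_self r p))))
    rw [horb6 p hp] at hmem
    simp only [T6, Set.mem_insert_iff, Set.mem_singleton_iff] at hmem
    rcases hmem with h | h | h | h | h | h
    · have h2 : r12 r (r23 r (r12 r p)) = r23 r p := by
        have := congrArg (r23 r) h
        rwa [bb hqb] at this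
      exact absurd h2.symm (d36 hqb hp)
    · have h2 : r12 r (r23 r (r12 r p)) = r23 r (r12 r p) := by
        have := congrArg (r23 r) h
        rwa [bb hqb] at this
      exact absurd h2.symm (d56 hqb hp)
    · have h2 : r12 r (r23 r (r12 r p)) = p := (bb hqb).injective h
      exact absurd h2.symm (d16 hqb hp)
    · exact h
    · have h2 : r12 r (r23 r (r12 r p)) = r12 r p := (bb hqb).injective h
      exact absurd h2.symm (d26 hqb hp)
    · have hu : r12 r (r23 r (r12 r p)) ∉ Sat r :=
        (sat_congr (orb_mem_a (orb_mem_b (orb_mem_a (mem_orb_self r p))))).not.mp hp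
      exact absurd h (nfb hqb hu)
  -- (r12 ∘ r23)³ = id pointwise
  have h3 : ∀ p, r12 r (r23 r (r12 r (r23 r (r12 r (r23 r p))))) = p := by
    intro p
    by_cases hp : p ∈ Sat r
    · rw [← hSatEq] at hp
      by_cases hp1 : p.1 = p.2.1 <;> by_cases hp2 : p.2.1 = p.2.2
      · simp only [fix_a_of hqb hp1, fix_b_of hqb hp2]
      · -- p ∈ Diag2X \ XDiag2
        have hfIm : r23 r p ∈ r12 r '' (XDiag2 \ Diag2X) := by
          rw [hfg]
          exact ⟨p, ⟨hp1, hp2⟩, rfl⟩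
        obtain ⟨v, hv, hveq⟩ := hfIm
        have hBu : r23 r (r12 r (r23 r p)) = r12 r (r23 r p) := by
          rw [← hveq, aa hqb]
          exact fix_b_of hqb hv.1
        rw [hBu, aa hqb, bb hqb]
        exact fix_a_of hqb hp1
      · -- p ∈ XDiag2 \ Diag2X
        have hgIm : r12 r p ∈ r23 r '' (Diag2X \ XDiag2) := by
          rw [← hfg]
          exact ⟨p, ⟨hp2, hp1⟩, rfl⟩
        obtain ⟨v, hv, hveq⟩ := hgIm
        have hfix : r12 r (r23 r (r12 r p)) = r23 r (r12 r p) := by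
          rw [← hveq, bb hqb]
          exact fix_a_of hqb hv.1
        rw [fix_b_of hqb hp2, hfix, bb hqb]
        exact aa hqb p
      · -- p ∈ fIm
        have hpf : p ∈ r23 r '' (Diag2X \ XDiag2) := by
          rcases hp with hB | hfm
          · rcases hB with h | h
            · exact absurd h hp1
            · exact absurd h hp2
          · exact hfm
        obtain ⟨w, hw, hweq⟩ := hpf
        have hAw : r12 r w = w := fix_a_of hqb hw.1
        have hfw : r23 r w ∈ r12 r '' (XDiag2 \ Diag2X) := by
          rw [hfg]
          exact ⟨w, hw, rfl⟩
        obtain ⟨v, hv, hveq⟩ := hfw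
        have hfix : r23 r (r12 r (r23 r w)) = r12 r (r23 r w) := by
          rw [← hveq, aa hqb]
          exact fix_b_of hqb hv.1
        rw [← hweq, bb hqb, hAw, hfix, aa hqb]
    · have hb : r23 r p ∉ Sat r := good_b hqb hp
      have h := keyI (r23 r p) hb
      rw [bb hqb] at h
      rw [h]
      exact aa hqb p
  -- conclude the braid relation
  funext p
  simp only [Function.comp_apply]
  conv_lhs => rw [← h3 p]
  rw [aa hqb, bb hqb, aa hqb]

end Main

end QBS

/-- A finite quantum binomial set with |X| = n has exactly C(n,3) square-free
D-orbits in X³ iff it is a symmetric set (r satisfies the braid relation). -/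
theorem card_squarefree_orbits_eq_iff_symmetric {X : Type*} [Fintype X]
    (r : X × X → X × X) (hqb : IsQuantumBinomial r) :
    {O : Set (X × X × X) | IsDOrbit r O ∧ O ∩ (Diag2X ∪ XDiag2) = ∅}.ncard
        = (Fintype.card X).choose 3 ↔ IsBraided r := by
  exact ⟨QBS.converse_braided hqb, QBS.forward_count hqb⟩
end

section
/- Fix n ≥ 1, an alphabet X = {x₁,…,xₙ} and a set W ⊆ X² of words of length 2 over X. The following conditions are equivalent: (a) the graph Γ_W is an acyclic tournament; (b) for every m ≥ 0 the number of normal words of length m is |N^(m)| = C(n+m−1, m); (c) there is an enumeration (permutation) y₁, …, yₙ of x₁, …, xₙ such that W = {y_j y_i : 1 ≤ i < j ≤ n}; (d) there is an enumeration y₁, …, yₙ of x₁, …, xₙ such that the set of all normal words (of all lengths) is exactly the set of ordered monomials {y₁^{α₁} y₂^{α₂} ⋯ yₙ^{αₙ} : αᵢ ≥ 0}. -/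
/-- A word over the alphabet `X` is normal (mod `W`) if none of its length-2
factors lies in `W`. -/
def IsNormalWord {X : Type*} (W : Set (X × X)) (l : List X) : Prop :=
  l.Chain' (fun a b => (a, b) ∉ W)

/-- The graph Γ_W (with edge x → y iff xy ∈ W) is an acyclic tournament. -/
def IsAcyclicTournament {X : Type*} (W : Set (X × X)) : Prop :=
  (∀ x : X, (x, x) ∉ W) ∧
  (∀ x y : X, x ≠ y → Xor' ((x, y) ∈ W) ((y, x) ∈ W)) ∧
  (∀ x : X, ¬ Relation.TransGen (fun a b => (a, b) ∈ W) x x)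

/-!
Normal words of length `m + 1` are counted by `𝟙ᵀ Aᵐ 𝟙`, where `A` is the 0/1 matrix of the
pairs not in `W`. If these counts are `C(n + m, m + 1)`, binomial inversion gives
`𝟙ᵀ (A - 1)ʲ 𝟙 = C(n, j + 1)`. Hence the largest ideal of `ℚ[X]` on which `q ↦ 𝟙ᵀ q(A) 𝟙`
vanishes contains `(X - 1)ⁿ` but not `(X - 1)ⁿ⁻¹`; as it contains the characteristic polynomial,
that polynomial is `(X - 1)ⁿ` and `A - 1` is nilpotent. Its vanishing trace puts every loop
outside `W`, nilpotency of the nonnegative matrix `A - 1` makes the remaining allowed pairs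
acyclic, and the count `C(n, 2)` of those pairs leaves room for exactly one orientation of each
pair of distinct letters.

Conversely, an acyclic tournament is the strict order of an enumeration `y`; the normal words are
then the words that are sorted along `y`, which are exactly the ordered monomials, and sorted
words of length `m` correspond to multisets of size `m`.
-/

theorem isNormalWord_singleton {X : Type*} {W : Set (X × X)} {a : X} : IsNormalWord W [a] :=
  List.isChain_singleton a

theorem isNormalWord_pair {X : Type*} {W : Set (X × X)} {a b : X} :
    IsNormalWord W [a, b] ↔ (a, b) ∉ W :=
  List.isChain_pair

theorem isNormalWord_cons_cons {X : Type*} {W : Set (X × X)} {a b : X} {l : List X} :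
    IsNormalWord W (a :: b :: l) ↔ (a, b) ∉ W ∧ IsNormalWord W (b :: l) :=
  List.isChain_cons_cons

section Enumeration

variable {X : Type*} {n : ℕ}

def decreasingPairs (y : Fin n → X) : Set (X × X) :=
  {p | ∃ i j : Fin n, i < j ∧ p = (y j, y i)}

def orderedMonomial (y : Fin n → X) (α : Fin n → ℕ) : List X :=
  ((List.finRange n).map fun i => List.replicate (α i) (y i)).flatten

theorem mem_decreasingPairs_iff (y : Fin n ≃ X) {a b : X} :
    (a, b) ∈ decreasingPairs y ↔ y.symm b < y.symm a := by
  constructor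
  · rintro ⟨i, j, hij, h⟩
    simp_all
  · exact fun h => ⟨y.symm b, y.symm a, h, by simp⟩

theorem isNormalWord_decreasingPairs_iff (y : Fin n ≃ X) (l : List X) :
    IsNormalWord (decreasingPairs y) l ↔ (l.map y.symm).Pairwise (· ≤ ·) := by
  change List.IsChain _ l ↔ _
  rw [← List.isChain_iff_pairwise, List.isChain_map]
  simp only [mem_decreasingPairs_iff, not_lt]

theorem map_orderedMonomial {Y : Type*} (f : X → Y) (y : Fin n → X) (α : Fin n → ℕ) :
    (orderedMonomial y α).map f = orderedMonomial (f ∘ y) α := by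
  simp [orderedMonomial, List.map_flatten, Function.comp_def]

theorem pairwise_orderedMonomial_id (α : Fin n → ℕ) :
    (orderedMonomial id α).Pairwise (· ≤ ·) := by
  refine List.pairwise_flatten.mpr ⟨?_, ?_⟩
  · simp [List.pairwise_replicate]
  · refine List.pairwise_map.mpr ((List.pairwise_lt_finRange n).imp fun hij a ha b hb => ?_)
    rw [List.eq_of_mem_replicate ha, List.eq_of_mem_replicate hb]
    exact hij.le

theorem count_orderedMonomial_id (α : Fin n → ℕ) (i : Fin n) :
    (orderedMonomial id α).count i = α i := by
  rw [orderedMonomial, List.count_flatten, List.map_map, ← Fin.sum_univ_def]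
  simp [List.count_replicate]

theorem exists_eq_orderedMonomial_iff (y : Fin n ≃ X) (l : List X) :
    (∃ α, l = orderedMonomial y α) ↔ (l.map y.symm).Pairwise (· ≤ ·) := by
  constructor
  · rintro ⟨α, rfl⟩
    rw [map_orderedMonomial, Equiv.symm_comp_self]
    exact pairwise_orderedMonomial_id α
  · intro hl
    set α : Fin n → ℕ := fun i => (l.map y.symm).count i
    have hsorted : l.map y.symm = orderedMonomial id α :=
      List.Perm.eq_of_pairwise' hl (pairwise_orderedMonomial_id α) <|
        List.perm_iff_count.mpr fun i => (count_orderedMonomial_id α i).symm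
    refine ⟨α, ?_⟩
    calc l = (l.map y.symm).map y := by rw [List.map_map, Equiv.self_comp_symm, List.map_id]
      _ = orderedMonomial y α := by rw [hsorted, map_orderedMonomial]; rfl

theorem setOf_isNormalWord_decreasingPairs (y : Fin n ≃ X) :
    {l | IsNormalWord (decreasingPairs y) l} = {l | ∃ α, l = orderedMonomial y α} :=
  Set.ext fun l =>
    (isNormalWord_decreasingPairs_iff y l).trans (exists_eq_orderedMonomial_iff y l).symm

theorem eq_decreasingPairs_of_setOf_isNormalWord_eq {W : Set (X × X)} (y : Fin n ≃ X)
    (hW : {l | IsNormalWord W l} = {l | ∃ α, l = orderedMonomial y α}) :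
    W = decreasingPairs y := by
  ext ⟨a, b⟩
  have hab := Set.ext_iff.mp hW [a, b]
  simp only [Set.mem_ofPred_eq, isNormalWord_pair, exists_eq_orderedMonomial_iff, List.map_cons,
    List.map_nil, List.pairwise_pair] at hab
  rw [mem_decreasingPairs_iff, ← not_le, ← hab, not_not]

theorem List.ncard_setOf_length_pairwise_le {α : Type*} [LinearOrder α] [Fintype α] (m : ℕ) :
    {l : List α | l.length = m ∧ l.Pairwise (· ≤ ·)}.ncard =
      (Fintype.card α + m - 1).choose m := by
  have hrange : {l : List α | l.length = m ∧ l.Pairwise (· ≤ ·)} =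
      Set.range fun s : Sym α m => (s : Multiset α).sort := by
    ext l
    constructor
    · rintro ⟨hlen, hl⟩
      refine ⟨⟨l, hlen⟩, (List.Perm.eq_of_pairwise' hl (Multiset.pairwise_sort _ _) ?_).symm⟩
      exact Quotient.exact (Multiset.sort_eq (l : Multiset α) _).symm
    · rintro ⟨s, rfl⟩
      exact ⟨by simp, Multiset.pairwise_sort _ _⟩
  have hinj : Function.Injective fun s : Sym α m => (s : Multiset α).sort := fun s t h =>
    Sym.coe_injective <| by simpa using congrArg (fun l : List α => (l : Multiset α)) h
  rw [hrange, Set.ncard_range_of_injective hinj, Nat.card_eq_fintype_card, Sym.card_sym_eq_choose]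

theorem ncard_setOf_length_isNormalWord_decreasingPairs (y : Fin n ≃ X) (m : ℕ) :
    {l : List X | l.length = m ∧ IsNormalWord (decreasingPairs y) l}.ncard =
      (n + m - 1).choose m := by
  have himage : {l : List X | l.length = m ∧ IsNormalWord (decreasingPairs y) l} =
      List.map y '' {l | l.length = m ∧ l.Pairwise (· ≤ ·)} := by
    ext l
    simp only [Set.mem_ofPred_eq, Set.mem_image, isNormalWord_decreasingPairs_iff]
    constructor
    · rintro ⟨hlen, hl⟩
      exact ⟨l.map y.symm, ⟨by simp [hlen], hl⟩, by simp [List.map_map]⟩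
    · rintro ⟨l, ⟨hlen, hl⟩, rfl⟩
      simpa [List.map_map, hlen] using hl
  rw [himage, Set.ncard_image_of_injective _ (List.map_injective_iff.mpr y.injective),
    List.ncard_setOf_length_pairwise_le, Fintype.card_fin]

end Enumeration

theorem IsAcyclicTournament.isStrictTotalOrder {X : Type*} {W : Set (X × X)}
    (h : IsAcyclicTournament W) : IsStrictTotalOrder X fun a b => (b, a) ∈ W where
  trichotomous a b hba hab := by
    by_contra hne
    exact (h.2.1 a b hne).elim (fun h' => hab h'.1) (fun h' => hba h'.1)
  irrefl a := h.1 a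
  trans a b c hba hcb := by
    by_contra hca
    obtain rfl | hne := eq_or_ne a c
    · exact h.2.2 a (.head hcb (.single hba))
    · have hac : (a, c) ∈ W := ((h.2.1 a c hne).resolve_right fun h' => hca h'.1).1
      exact h.2.2 a (.head hac (.head hcb (.single hba)))

theorem IsAcyclicTournament.exists_eq_decreasingPairs {X : Type*} [Fintype X] {n : ℕ}
    {W : Set (X × X)} (h : IsAcyclicTournament W) (hcard : Fintype.card X = n) :
    ∃ y : Fin n ≃ X, W = decreasingPairs y := by
  classical
  have := h.isStrictTotalOrder
  let : LinearOrder X := linearOrderOfSTO fun a b => (b, a) ∈ W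
  refine ⟨(monoEquivOfFin X hcard).toEquiv, Set.ext fun ⟨a, b⟩ => ?_⟩
  rw [mem_decreasingPairs_iff]
  exact (monoEquivOfFin X hcard).symm.lt_iff_lt.symm

theorem List.ncard_setOf_length_succ {X : Type*} [Fintype X] (P : List X → Prop) (m : ℕ) :
    {l : List X | l.length = m + 1 ∧ P l}.ncard =
      ∑ b, {l : List X | l.length = m ∧ P (b :: l)}.ncard := by
  have (b : X) : Finite {l : List X | l.length = m ∧ P (b :: l)} :=
    ((List.finite_length_eq X m).subset fun _ hl => hl.1).to_subtype
  simp_rw [← Nat.card_coe_set_eq]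
  rw [← Nat.card_sigma]
  refine Nat.card_congr
    { toFun := fun
        | ⟨b :: l, h⟩ => ⟨b, l, Nat.succ.inj h.1, h.2⟩
        | ⟨[], h⟩ => absurd h.1 (by simp)
      invFun := fun ⟨b, l, h⟩ => ⟨b :: l, congrArg (· + 1) h.1, h.2⟩
      left_inv := fun
        | ⟨b :: l, h⟩ => rfl
        | ⟨[], h⟩ => absurd h.1 (by simp)
      right_inv := fun ⟨b, l, h⟩ => rfl }

section TransferMatrix

open Matrix

variable {X : Type*} (R : Type*) (W : Set (X × X))

open Classical in
noncomputable def transferMatrix [Zero R] [One R] : Matrix X X R :=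
  Matrix.of fun a b => if (a, b) ∈ W then 0 else 1

open Classical in
theorem transferMatrix_apply [Zero R] [One R] (a b : X) :
    transferMatrix R W a b = if (a, b) ∈ W then 0 else 1 :=
  rfl

variable [Fintype X] [DecidableEq X] [CommSemiring R]

theorem cast_ncard_isNormalWord_cons (m : ℕ) (a : X) :
    ({l : List X | l.length = m ∧ IsNormalWord W (a :: l)}.ncard : R) =
      (transferMatrix R W ^ m *ᵥ 1) a := by
  induction m generalizing a with
  | zero =>
    have : {l : List X | l.length = 0 ∧ IsNormalWord W (a :: l)} = {[]} := by
      ext l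
      simp +contextual [isNormalWord_singleton]
    rw [this]
    simp
  | succ m ih =>
    rw [List.ncard_setOf_length_succ, Nat.cast_sum, pow_succ', ← mulVec_mulVec, mulVec,
      dotProduct]
    refine Finset.sum_congr rfl fun b _ => ?_
    simp only [isNormalWord_cons_cons, transferMatrix_apply]
    by_cases hab : (a, b) ∈ W
    · simp [hab]
    · simp [hab, ← ih]

theorem cast_ncard_isNormalWord_succ (m : ℕ) :
    ({l : List X | l.length = m + 1 ∧ IsNormalWord W l}.ncard : R) =
      ∑ a, ∑ b, (transferMatrix R W ^ m) a b := by
  rw [List.ncard_setOf_length_succ, Nat.cast_sum]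
  simp [cast_ncard_isNormalWord_cons, mulVec, dotProduct]

end TransferMatrix

theorem binomial_transform_injective {M : Type*} [AddCommGroup M] {u v : ℕ → M}
    (h : ∀ m, ∑ i ∈ Finset.range (m + 1), m.choose i • u i =
      ∑ i ∈ Finset.range (m + 1), m.choose i • v i) : u = v := by
  funext m
  induction m using Nat.strong_induction_on with
  | _ m ih =>
    have hm := h m
    rw [Finset.sum_range_succ, Finset.sum_range_succ,
      Finset.sum_congr rfl fun i hi => by rw [ih i (Finset.mem_range.mp hi)]] at hm
    simpa using hm

theorem Nat.add_choose_succ_eq_sum (n m : ℕ) :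
    (n + m).choose (m + 1) = ∑ i ∈ Finset.range (m + 1), m.choose i * n.choose (i + 1) := by
  rw [add_comm, Nat.add_choose_eq, Finset.Nat.sum_antidiagonal_succ', Nat.choose_succ_self,
    zero_mul, zero_add, ← Finset.Nat.sum_antidiagonal_swap,
    Finset.Nat.sum_antidiagonal_eq_sum_range_succ_mk]
  refine Finset.sum_congr rfl fun k hk => ?_
  dsimp only [Prod.swap]
  rw [Nat.choose_symm (Finset.mem_range_succ_iff.mp hk)]

theorem pow_eq_sum_choose_nsmul_sub_one_pow {R : Type*} [Ring R] (x : R) (m : ℕ) :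
    x ^ m = ∑ i ∈ Finset.range (m + 1), m.choose i • (x - 1) ^ i := by
  conv_lhs => rw [← sub_add_cancel x 1, (Commute.one_right (x - 1)).add_pow]
  simp only [one_pow, mul_one, nsmul_eq_mul']

theorem pow_dvd_of_mem_of_forall_pow_notMem {R : Type*} [CommRing R] [IsDomain R]
    [IsPrincipalIdealRing R] {I : Ideal R} {x : R} (hx : Prime x) {n : ℕ} (hn : x ^ n ∈ I)
    (hlt : ∀ k < n, x ^ k ∉ I) {p : R} (hp : p ∈ I) : x ^ n ∣ p := by
  rw [Submodule.IsPrincipal.mem_iff_generator_dvd] at hn hp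
  obtain ⟨k, hkn, hk⟩ := (dvd_prime_pow hx n).mp hn
  obtain rfl : k = n := le_antisymm hkn <| not_lt.mp fun hkn' =>
    hlt k hkn' ((Submodule.IsPrincipal.mem_iff_generator_dvd I).mpr hk.dvd)
  exact hk.symm.dvd.trans hp

section CharacteristicPolynomial

open Polynomial Matrix

variable {K : Type*} [Field K]

def annihilatorIdeal (φ : K[X] →ₗ[K] K) : Ideal K[X] where
  carrier := {q | ∀ r, φ (r * q) = 0}
  add_mem' hp hq r := by rw [mul_add, map_add, hp r, hq r, add_zero]
  zero_mem' r := by rw [mul_zero, map_zero]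
  smul_mem' c q hq r := by rw [smul_eq_mul, ← mul_assoc]; exact hq (r * c)

theorem mem_annihilatorIdeal_iff {φ : K[X] →ₗ[K] K} {q : K[X]} :
    q ∈ annihilatorIdeal φ ↔ ∀ m : ℕ, φ (X ^ m * q) = 0 := by
  refine ⟨fun h m => h (X ^ m), fun h r => ?_⟩
  induction r using Polynomial.induction_on' with
  | add p r hp hr => rw [add_mul, map_add, hp, hr, add_zero]
  | monomial m c =>
    rw [← C_mul_X_pow_eq_monomial, mul_assoc, ← smul_eq_C_mul, map_smul, h m, smul_zero]

variable {ι : Type*} [Fintype ι] [DecidableEq ι] (A : Matrix ι ι K)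

noncomputable def aevalEntrySum : K[X] →ₗ[K] K where
  toFun q := ∑ a, ∑ b, aeval A q a b
  map_add' p q := by simp [Finset.sum_add_distrib]
  map_smul' c q := by simp [Finset.mul_sum]

theorem aevalEntrySum_apply (q : K[X]) : aevalEntrySum A q = ∑ a, ∑ b, aeval A q a b :=
  rfl

theorem aevalEntrySum_X_pow (m : ℕ) : aevalEntrySum A (X ^ m) = ∑ a, ∑ b, (A ^ m) a b := by
  simp [aevalEntrySum_apply]

theorem aevalEntrySum_X_pow_mul (m : ℕ) (q : K[X]) :
    aevalEntrySum A (X ^ m * q) =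
      ∑ i ∈ Finset.range (m + 1), m.choose i • aevalEntrySum A ((X - 1) ^ i * q) := by
  rw [pow_eq_sum_choose_nsmul_sub_one_pow (X : K[X]) m, Finset.sum_mul, map_sum]
  simp only [smul_mul_assoc, map_nsmul]

variable {A}

theorem aevalEntrySum_sub_one_pow
    (h : ∀ m, ∑ a, ∑ b, (A ^ m) a b = ((Fintype.card ι + m).choose (m + 1) : K)) (j : ℕ) :
    aevalEntrySum A ((X - 1) ^ j) = (Fintype.card ι).choose (j + 1) := by
  refine congrFun (binomial_transform_injective (u := fun j => aevalEntrySum A ((X - 1) ^ j))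
    (v := fun j => ((Fintype.card ι).choose (j + 1) : K)) fun m => ?_) j
  have hm := aevalEntrySum_X_pow_mul A m 1
  simp only [mul_one] at hm
  rw [← hm, aevalEntrySum_X_pow, h, Nat.add_choose_succ_eq_sum]
  simp [nsmul_eq_mul]

theorem isNilpotent_sub_one_of_sum_pow_apply
    (h : ∀ m, ∑ a, ∑ b, (A ^ m) a b = ((Fintype.card ι + m).choose (m + 1) : K)) :
    IsNilpotent (A - 1) := by
  set n := Fintype.card ι
  have hprime : Prime (X - 1 : K[X]) := by simpa using prime_X_sub_C (1 : K)
  have hmonic : ((X - 1) ^ n : K[X]).Monic := by simpa using (monic_X_sub_C (1 : K)).pow n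
  have hpow : (X - 1) ^ n ∈ annihilatorIdeal (aevalEntrySum A) := by
    refine mem_annihilatorIdeal_iff.mpr fun m => ?_
    rw [aevalEntrySum_X_pow_mul]
    refine Finset.sum_eq_zero fun i _ => ?_
    rw [← pow_add, aevalEntrySum_sub_one_pow h,
      Nat.choose_eq_zero_of_lt (show n < i + n + 1 by omega), Nat.cast_zero, smul_zero]
  have hlt : ∀ k < n, (X - 1) ^ k ∉ annihilatorIdeal (aevalEntrySum A) := fun k hk hmem => by
    have := hmem ((X - 1) ^ (n - 1 - k))
    rw [← pow_add, Nat.sub_add_cancel (by omega), aevalEntrySum_sub_one_pow h,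
      Nat.sub_add_cancel (by omega), Nat.choose_self, Nat.cast_one] at this
    exact one_ne_zero this
  have hchar : A.charpoly ∈ annihilatorIdeal (aevalEntrySum A) := fun r => by
    simp [aevalEntrySum_apply, aeval_self_charpoly]
  have : A.charpoly = (X - 1) ^ n := eq_of_monic_of_dvd_of_natDegree_le hmonic (charpoly_monic A)
    (pow_dvd_of_mem_of_forall_pow_notMem hprime hpow hlt hchar)
    (by rw [charpoly_natDegree_eq_dim, natDegree_pow, ← C_1, natDegree_X_sub_C, mul_one])
  exact ⟨n, by simpa [this] using aeval_self_charpoly A⟩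

theorem sum_sub_one_apply_eq_choose_two
    (h : ∀ m, ∑ a, ∑ b, (A ^ m) a b = ((Fintype.card ι + m).choose (m + 1) : K)) :
    ∑ a, ∑ b, (A - 1) a b = (Fintype.card ι).choose 2 := by
  simpa [aevalEntrySum_apply] using aevalEntrySum_sub_one_pow h 1

end CharacteristicPolynomial

section NonnegMatrix

open Matrix

variable {R : Type*} [Semiring R] [PartialOrder R] [IsStrictOrderedRing R]
  {ι : Type*} [Fintype ι] [DecidableEq ι] {M : Matrix ι ι R}

theorem Matrix.exists_pow_apply_pos_of_transGen (hM : ∀ a b, 0 ≤ M a b) (k : ℕ) {a : ι}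
    (ha : Relation.TransGen (fun a b => 0 < M a b) a a) : ∃ b, 0 < (M ^ k) a b := by
  induction k generalizing a with
  | zero => exact ⟨a, by simp⟩
  | succ k ih =>
    obtain ⟨c, hac, hca⟩ := Relation.TransGen.head'_iff.mp ha
    obtain ⟨b, hb⟩ := ih (Relation.TransGen.tail' hca hac)
    refine ⟨b, ?_⟩
    rw [pow_succ', mul_apply]
    exact Finset.sum_pos' (fun d _ => mul_nonneg (hM a d) (pow_apply_nonneg hM k d b))
      ⟨c, Finset.mem_univ c, mul_pos hac hb⟩

theorem Matrix.not_transGen_of_isNilpotent (hM : ∀ a b, 0 ≤ M a b) (hnil : IsNilpotent M)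
    (a : ι) : ¬ Relation.TransGen (fun a b => 0 < M a b) a a := fun ha => by
  obtain ⟨k, hk⟩ := hnil
  obtain ⟨b, hb⟩ := exists_pow_apply_pos_of_transGen hM k ha
  simp [hk] at hb

end NonnegMatrix

theorem total_of_card_eq_choose_two {α : Type*} [Fintype α] [DecidableEq α]
    {r : α → α → Prop} [DecidableRel r] (hasymm : ∀ a b, r a b → ¬ r b a)
    (hcard : (Finset.univ.filter fun p : α × α => r p.1 p.2).card = (Fintype.card α).choose 2)
    {a b : α} (hab : a ≠ b) : r a b ∨ r b a := by
  set E := Finset.univ.filter fun p : α × α => r p.1 p.2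
  have hdisj : Disjoint E (E.image Prod.swap) := by
    simp only [Finset.disjoint_left, Finset.mem_image, E, Finset.mem_filter, Finset.mem_univ,
      true_and]
    rintro ⟨x, y⟩ hxy ⟨⟨y', x'⟩, hyx, he⟩
    simp only [Prod.swap_prod_mk, Prod.mk.injEq] at he
    obtain ⟨rfl, rfl⟩ := he
    exact hasymm _ _ hxy hyx
  have hsub : E ∪ E.image Prod.swap ⊆ Finset.univ.offDiag := by
    rintro ⟨x, y⟩ hp
    simp only [Finset.mem_union, Finset.mem_image, E, Finset.mem_filter, Finset.mem_univ,
      true_and, Finset.mem_offDiag] at hp ⊢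
    rintro rfl
    obtain h | ⟨⟨x', y'⟩, h, he⟩ := hp
    · exact hasymm x x h h
    · simp only [Prod.swap_prod_mk, Prod.mk.injEq] at he
      obtain ⟨rfl, rfl⟩ := he
      exact hasymm _ _ h h
  have hle : (Finset.univ : Finset α).offDiag.card ≤ (E ∪ E.image Prod.swap).card := by
    rw [Finset.card_union_of_disjoint hdisj, Finset.card_image_of_injective _ Prod.swap_injective,
      hcard, Finset.offDiag_card, Finset.card_univ, ← two_mul, Nat.choose_two_right,
      Nat.two_mul_div_two_of_even (Nat.even_mul_pred_self _), Nat.mul_sub_one]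
  have hmem : (a, b) ∈ E ∪ E.image Prod.swap := by
    rw [Finset.eq_of_subset_of_card_le hsub hle]
    simpa using hab
  simpa [E] using hmem

theorem Relation.asymm_of_forall_not_transGen {α : Type*} {r : α → α → Prop}
    (h : ∀ a, ¬ Relation.TransGen r a a) {a b : α} (hab : r a b) : ¬ r b a := fun hba =>
  h a (.tail (.single hab) hba)

section ComplRel

variable {X : Type*} {W : Set (X × X)}

def complRel (W : Set (X × X)) (a b : X) : Prop :=
  a ≠ b ∧ (a, b) ∉ W

theorem IsAcyclicTournament.of_complRel (hloop : ∀ x, (x, x) ∉ W)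
    (hacyclic : ∀ a, ¬ Relation.TransGen (complRel W) a a)
    (htotal : ∀ a b, a ≠ b → complRel W a b ∨ complRel W b a) : IsAcyclicTournament W := by
  have hasymm {a b : X} : complRel W a b → ¬ complRel W b a :=
    Relation.asymm_of_forall_not_transGen hacyclic
  have hmem {a b : X} (hab : a ≠ b) : (a, b) ∈ W ↔ complRel W b a :=
    ⟨fun hW => (htotal a b hab).resolve_left fun h => h.2 hW,
      fun hba => by_contra fun hW => hasymm hba ⟨hab, hW⟩⟩
  refine ⟨hloop, fun x y hxy => ?_, fun x hx => ?_⟩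
  · rw [hmem hxy, hmem hxy.symm]
    rcases htotal x y hxy with h | h
    · exact Or.inr ⟨h, hasymm h⟩
    · exact Or.inl ⟨h, hasymm h⟩
  · refine hacyclic x (Relation.transGen_swap.mp ?_)
    refine Relation.TransGen.mono (fun a b hab => ?_) x x hx
    exact (hmem (by rintro rfl; exact hloop a hab)).mp hab

variable [DecidableEq X]

open Classical in
theorem transferMatrix_sub_one_apply {R : Type*} [Ring R] (hloop : ∀ x, (x, x) ∉ W) (a b : X) :
    (transferMatrix R W - 1) a b = if complRel W a b then 1 else 0 := by
  by_cases hab : a = b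
  · subst hab
    simp [complRel, transferMatrix_apply, hloop]
  · by_cases hW : (a, b) ∈ W <;> simp [complRel, transferMatrix_apply, hab, hW]

theorem notMem_of_isNilpotent_transferMatrix_sub_one [Fintype X] {K : Type*} [Field K]
    [LinearOrder K] [IsStrictOrderedRing K] (hnil : IsNilpotent (transferMatrix K W - 1)) (x : X) :
    (x, x) ∉ W := by
  have htrace : ∑ x, (transferMatrix K W - 1) x x = 0 :=
    (Matrix.isNilpotent_trace_of_isNilpotent hnil).eq_zero
  intro hx
  have := (Finset.sum_eq_zero_iff_of_nonpos (fun y _ => ?_)).mp htrace x (Finset.mem_univ x)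
  · simp [transferMatrix_apply, hx] at this
  · by_cases hy : (y, y) ∈ W <;> simp [transferMatrix_apply, hy]

end ComplRel

theorem isAcyclicTournament_of_ncard {X : Type*} [Fintype X] {W : Set (X × X)}
    (h : ∀ m, {l : List X | l.length = m ∧ IsNormalWord W l}.ncard =
      (Fintype.card X + m - 1).choose m) :
    IsAcyclicTournament W := by
  classical
  set A := transferMatrix ℚ W
  have hA (m : ℕ) : ∑ a, ∑ b, (A ^ m) a b = ((Fintype.card X + m).choose (m + 1) : ℚ) := by
    rw [← cast_ncard_isNormalWord_succ, h, Nat.add_succ_sub_one]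
  have hnil : IsNilpotent (A - 1) := isNilpotent_sub_one_of_sum_pow_apply hA
  have hloop := notMem_of_isNilpotent_transferMatrix_sub_one hnil
  have hN : ∀ a b, (A - 1) a b = if complRel W a b then 1 else 0 :=
    transferMatrix_sub_one_apply hloop
  have hpos : (fun a b => 0 < (A - 1) a b) = complRel W := by
    funext a b
    rw [hN]
    split_ifs with hr <;> simp [hr]
  have hacyclic (a : X) : ¬ Relation.TransGen (complRel W) a a := by
    rw [← hpos]
    refine Matrix.not_transGen_of_isNilpotent (fun a b => ?_) hnil a
    rw [hN]
    split_ifs <;> norm_num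
  have hcard : (Finset.univ.filter fun p : X × X => complRel W p.1 p.2).card =
      (Fintype.card X).choose 2 := by
    have := sum_sub_one_apply_eq_choose_two hA
    simp only [hN] at this
    rw [← Fintype.sum_prod_type', Finset.sum_boole] at this
    exact_mod_cast this
  exact .of_complRel hloop hacyclic fun a b hab => total_of_card_eq_choose_two (r := complRel W)
    (fun _ _ => Relation.asymm_of_forall_not_transGen hacyclic) hcard hab

theorem monomial_algebra_tfae_general {X : Type*} [Fintype X] (n : ℕ)
    (hcard : Fintype.card X = n) (W : Set (X × X)) :
    [ IsAcyclicTournament W,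
      (∀ m : ℕ, {l : List X | l.length = m ∧ IsNormalWord W l}.ncard
          = (n + m - 1).choose m),
      (∃ y : Fin n ≃ X, W = {p : X × X | ∃ i j : Fin n, i < j ∧ p = (y j, y i)}),
      (∃ y : Fin n ≃ X, {l : List X | IsNormalWord W l} =
          {l : List X | ∃ α : Fin n → ℕ,
            l = ((List.finRange n).map (fun i => List.replicate (α i) (y i))).flatten})
    ].TFAE := by
  subst hcard
  tfae_have 1 → 3 := fun h => h.exists_eq_decreasingPairs rfl
  tfae_have 3 → 2 := by
    rintro ⟨y, rfl⟩
    exact ncard_setOf_length_isNormalWord_decreasingPairs y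
  tfae_have 2 → 1 := isAcyclicTournament_of_ncard
  tfae_have 3 → 4 := by
    rintro ⟨y, rfl⟩
    exact ⟨y, setOf_isNormalWord_decreasingPairs y⟩
  tfae_have 4 → 3 := fun ⟨y, hy⟩ => ⟨y, eq_decreasingPairs_of_setOf_isNormalWord_eq y hy⟩
  tfae_finish

/-- For an alphabet X of n ≥ 1 letters and a set W of words of length 2, the
following are equivalent: (a) Γ_W is an acyclic tournament; (b) the number of
normal words of length m is C(n+m-1, m) for all m; (c) for some enumeration
y₁,…,yₙ of X, W = {y_j y_i : i < j}; (d) for some enumeration y₁,…,yₙ of X the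
set of normal words is exactly the set of ordered monomials y₁^{α₁} ⋯ yₙ^{αₙ}. -/
theorem monomial_algebra_tfae {X : Type*} [Fintype X] (n : ℕ) (hn : 1 ≤ n)
    (hcard : Fintype.card X = n) (W : Set (X × X)) :
    [ IsAcyclicTournament W,
      (∀ m : ℕ, {l : List X | l.length = m ∧ IsNormalWord W l}.ncard
          = (n + m - 1).choose m),
      (∃ y : Fin n ≃ X, W = {p : X × X | ∃ i j : Fin n, i < j ∧ p = (y j, y i)}),
      (∃ y : Fin n ≃ X, {l : List X | IsNormalWord W l} =
          {l : List X | ∃ α : Fin n → ℕ,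
            l = ((List.finRange n).map (fun i => List.replicate (α i) (y i))).flatten})
    ].TFAE :=
  monomial_algebra_tfae_general n hcard W
end

section
/- Fix n ≥ 1, an alphabet X = {x₁,…,xₙ} and a set W ⊆ X² of words of length 2 over X. Then the following are equivalent: (a) |W| = C(n,2) = n(n−1)/2, W contains no word of the form xx with x ∈ X, and the counting function m ↦ |N^(m)| of normal words is bounded by a polynomial in m (i.e. there exist constants C > 0 and d ∈ ℕ such that |N^(m)| ≤ C·(m+1)^d for all m ≥ 0); (b) the graph Γ_W is an acyclic tournament. -/
/-! If `Γ_W` is an acyclic tournament, then "`xy ∉ W`" is a linear order on `X`, the normal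
words are exactly the sorted words, and a sorted word of length `m` is determined by its letter
counts, so there are at most `(m + 1) ^ n` of them.

Conversely, any infinite walk `u` in the complement of `W` that never stays put produces `2 ^ m`
distinct normal words of length `m + 1`: read off `u`, at each step either repeating the current
letter (allowed, as `W` has no squares) or advancing along `u`. Polynomial growth therefore forbids
such walks. A pair `x ≠ y` with `xy, yx ∉ W` would give the walk `xyxy…`, so `Γ_W` is total;
then `W` and its reverse cover the off-diagonal, and `|W| = C(n,2)` forces them to be disjoint.
Finally a cycle of `Γ_W`, run backwards, would be such a walk as well. -/

section Chains

variable {X : Type*} {R : X → X → Prop}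

def walkWord (u : ℕ → X) : ℕ → List Bool → List X
  | k, [] => [u k]
  | k, b :: s => u k :: walkWord u (k + b.toNat) s

theorem length_walkWord (u : ℕ → X) : ∀ (k : ℕ) (s : List Bool),
    (walkWord u k s).length = s.length + 1
  | _, [] => rfl
  | k, b :: s => by simp [walkWord, length_walkWord u (k + b.toNat) s]

theorem head?_walkWord (u : ℕ → X) : ∀ (k : ℕ) (s : List Bool),
    (walkWord u k s).head? = some (u k)
  | _, [] => rfl
  | _, _ :: _ => rfl

theorem isChain_walkWord (hR : ∀ a, R a a) {u : ℕ → X} (hu : ∀ i, R (u i) (u (i + 1))) :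
    ∀ (k : ℕ) (s : List Bool), (walkWord u k s).IsChain R
  | _, [] => List.isChain_singleton _
  | k, b :: s => by
    refine List.isChain_cons.mpr ⟨fun y hy => ?_, isChain_walkWord hR hu _ s⟩
    rw [head?_walkWord, Option.mem_some_iff] at hy
    subst hy
    cases b
    · exact hR _
    · exact hu k

theorem walkWord_injective {u : ℕ → X} (hu : ∀ i, u i ≠ u (i + 1)) (k : ℕ) :
    Function.Injective (walkWord u k) := by
  intro s₁ s₂ h
  have hlen := length_walkWord u k s₁
  rw [h, length_walkWord] at hlen
  induction s₁ generalizing s₂ k with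
  | nil => exact (List.length_eq_zero_iff.mp (by simpa using hlen)).symm
  | cons b₁ s₁ ih =>
    obtain _ | ⟨b₂, s₂⟩ := s₂
    · simp at hlen
    simp only [walkWord, List.cons.injEq, true_and] at h
    have hb : b₁ = b₂ := by
      have hhead := head?_walkWord u (k + b₁.toNat) s₁
      rw [h, head?_walkWord, Option.some_inj] at hhead
      revert hhead
      cases b₁ <;> cases b₂ <;> simp [hu k, (hu k).symm]
    subst hb
    rw [ih _ h (by simpa using hlen)]

theorem two_pow_le_ncard_isChain [Finite X] (hR : ∀ a, R a a) {u : ℕ → X}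
    (hu : ∀ i, R (u i) (u (i + 1))) (hne : ∀ i, u i ≠ u (i + 1)) (m : ℕ) :
    2 ^ m ≤ {l : List X | l.length = m + 1 ∧ l.IsChain R}.ncard := by
  let f : List.Vector Bool m → List X := fun v => walkWord u 0 v.toList
  have hf : Function.Injective f := (walkWord_injective hne 0).comp List.Vector.toList_injective
  have hmaps : Set.range f ⊆ {l : List X | l.length = m + 1 ∧ l.IsChain R} := by
    rintro _ ⟨v, rfl⟩
    exact ⟨by simp [f, length_walkWord], isChain_walkWord hR hu 0 _⟩
  have hfin : {l : List X | l.length = m + 1 ∧ l.IsChain R}.Finite :=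
    (List.finite_length_eq X (m + 1)).subset fun l hl => hl.1
  calc 2 ^ m = (Set.range f).ncard := by
        rw [← Set.image_univ, Set.ncard_image_of_injective _ hf, Set.ncard_univ,
          Nat.card_eq_fintype_card, card_vector, Fintype.card_bool]
    _ ≤ _ := Set.ncard_le_ncard hmaps hfin

theorem exists_mul_pow_lt_two_pow (C d : ℕ) : ∃ m, C * (m + 2) ^ d < 2 ^ m := by
  have h := (tendsto_pow_const_div_const_pow_of_one_lt d one_lt_two).comp
    (Filter.tendsto_add_atTop_nat 2)
  have hε : (0 : ℝ) < 1 / (4 * (C + 1)) := by positivity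
  obtain ⟨m, hm⟩ := (h.eventually_lt_const hε).exists
  simp only [Function.comp_apply, Nat.cast_add, Nat.cast_ofNat] at hm
  rw [div_lt_div_iff₀ (by positivity) (by positivity), pow_add] at hm
  refine ⟨m, ?_⟩
  have : (C : ℝ) * (m + 2) ^ d < 2 ^ m := by
    nlinarith [pow_pos (show (0 : ℝ) < m + 2 by positivity) d]
  exact_mod_cast this

theorem exists_apply_eq_apply_succ_of_ncard_isChain_le [Finite X] (hR : ∀ a, R a a) {C d : ℕ}
    (hbound : ∀ m, {l : List X | l.length = m ∧ l.IsChain R}.ncard ≤ C * (m + 1) ^ d)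
    (u : ℕ → X) (hu : ∀ i, R (u i) (u (i + 1))) : ∃ i, u i = u (i + 1) := by
  by_contra! hne
  obtain ⟨m, hm⟩ := exists_mul_pow_lt_two_pow C d
  have := two_pow_le_ncard_isChain hR hu hne m
  have : _ ≤ C * (m + 2) ^ d := hbound (m + 1)
  omega

theorem not_and_of_forall_exists_apply_eq_apply_succ
    (h : ∀ u : ℕ → X, (∀ i, R (u i) (u (i + 1))) → ∃ i, u i = u (i + 1))
    {x y : X} (hxy : x ≠ y) : ¬(R x y ∧ R y x) := by
  rintro ⟨hRxy, hRyx⟩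
  let u : ℕ → X := fun i => if Even i then x else y
  have hstep : ∀ i, R (u i) (u (i + 1)) ∧ u i ≠ u (i + 1) := by
    intro i
    by_cases hi : Even i <;> simp [u, hi, Nat.even_add_one, hRxy, hRyx, hxy, hxy.symm]
  obtain ⟨i, hi⟩ := h u fun i => (hstep i).1
  exact (hstep i).2 hi

theorem ncard_isChain_le [Fintype X] [IsTrans X R] [Std.Antisymm R] (m : ℕ) :
    {l : List X | l.length = m ∧ l.IsChain R}.ncard ≤ (m + 1) ^ Fintype.card X := by
  classical
  let counts : List X → X → ℕ := fun l x => l.count x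
  let box : Finset (X → ℕ) := Fintype.piFinset fun _ => Finset.range (m + 1)
  have hmaps : ∀ l ∈ {l : List X | l.length = m ∧ l.IsChain R},
      counts l ∈ (box : Set (X → ℕ)) := by
    rintro l ⟨rfl, -⟩
    simpa [counts, box, Nat.lt_succ_iff] using fun x => List.count_le_length
  have hinj : Set.InjOn counts {l : List X | l.length = m ∧ l.IsChain R} := by
    rintro l₁ ⟨-, h₁⟩ l₂ ⟨-, h₂⟩ hcounts
    exact List.Perm.eq_of_pairwise (fun _ _ _ _ => antisymm) (List.isChain_iff_pairwise.mp h₁)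
      (List.isChain_iff_pairwise.mp h₂) (List.perm_iff_count.mpr (congrFun hcounts))
  calc _ ≤ _ := Set.ncard_le_ncard_of_injOn counts hmaps hinj
    _ = (m + 1) ^ Fintype.card X := by
      simp only [Set.ncard_coe_finset, box, Fintype.card_piFinset, Finset.card_range,
        Finset.prod_const, Finset.card_univ]

end Chains

section Tournaments

variable {X : Type*} {W : Set (X × X)}

theorem two_mul_ncard_eq [Fintype X] (hloop : ∀ x : X, (x, x) ∉ W)
    (htot : ∀ x y : X, x ≠ y → (x, y) ∈ W ∨ (y, x) ∈ W) :
    2 * W.ncard = 2 * (Fintype.card X).choose 2 + (W ∩ Prod.swap ⁻¹' W).ncard := by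
  classical
  have hunion : W ∪ Prod.swap ⁻¹' W = ((Finset.univ : Finset X).offDiag : Set (X × X)) := by
    ext ⟨x, y⟩
    simp only [Set.mem_union, Set.mem_preimage, Prod.swap_prod_mk, Finset.coe_offDiag,
      Set.mem_offDiag, Finset.coe_univ, Set.mem_univ, true_and]
    refine ⟨?_, htot x y⟩
    rintro (h | h) rfl <;> exact hloop x h
  have hswap : (Prod.swap ⁻¹' W).ncard = W.ncard := by
    rw [← Set.image_swap_eq_preimage_swap]
    exact Set.ncard_image_of_injective _ Prod.swap_injective
  have hchoose (n : ℕ) : 2 * n.choose 2 = n * n - n := by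
    rw [Nat.choose_two_right, Nat.mul_div_cancel' (Nat.even_mul_pred_self n).two_dvd,
      Nat.mul_sub_one]
  have hsum := Set.ncard_union_add_ncard_inter W (Prod.swap ⁻¹' W)
  rw [hunion, Set.ncard_coe_finset, Finset.offDiag_card, hswap, Finset.card_univ,
    ← hchoose] at hsum
  omega

theorem ncard_eq_choose_two_iff [Fintype X] (hloop : ∀ x : X, (x, x) ∉ W)
    (htot : ∀ x y : X, x ≠ y → (x, y) ∈ W ∨ (y, x) ∈ W) :
    W.ncard = (Fintype.card X).choose 2 ↔ ∀ x y : X, (x, y) ∈ W → (y, x) ∉ W := by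
  have h := two_mul_ncard_eq hloop htot
  calc W.ncard = (Fintype.card X).choose 2 ↔ (W ∩ Prod.swap ⁻¹' W).ncard = 0 := by omega
    _ ↔ W ∩ Prod.swap ⁻¹' W = ∅ := Set.ncard_eq_zero
    _ ↔ _ := by simp [Set.eq_empty_iff_forall_notMem]

theorem not_transGen_self (hloop : ∀ x : X, (x, x) ∉ W)
    (hasymm : ∀ x y : X, (x, y) ∈ W → (y, x) ∉ W)
    (hstall : ∀ u : ℕ → X, (∀ i, (u i, u (i + 1)) ∉ W) → ∃ i, u i = u (i + 1))
    (x : X) :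
    ¬Relation.TransGen (fun a b => (a, b) ∈ W) x x := by
  intro hcycle
  have hnacc : ¬Acc (fun a b => (a, b) ∈ W) x := by
    rw [← acc_transGen_iff, not_acc_iff_exists_descending_chain]
    exact ⟨fun _ => x, rfl, fun _ => hcycle⟩
  obtain ⟨u, -, hu⟩ := not_acc_iff_exists_descending_chain.mp hnacc
  obtain ⟨i, hi⟩ := hstall u fun i => hasymm _ _ (hu i)
  exact hloop (u i) (hi ▸ hu i)

namespace IsAcyclicTournament

theorem total (h : IsAcyclicTournament W) {x y : X} (hxy : x ≠ y) :
    (x, y) ∈ W ∨ (y, x) ∈ W :=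
  Xor.or (h.2.1 x y hxy)

theorem asymm (h : IsAcyclicTournament W) {x y : X} (hxy : (x, y) ∈ W) : (y, x) ∉ W := by
  rcases eq_or_ne x y with rfl | hne
  · exact h.1 x
  · exact ((xor_iff_or_and_not_and _ _).mp (h.2.1 x y hne)).2 ∘ And.intro hxy

theorem isTrans_compl (h : IsAcyclicTournament W) : IsTrans X fun a b => (a, b) ∉ W := by
  refine ⟨fun a b c hab hbc hac => ?_⟩
  rcases eq_or_ne a b with rfl | hab'
  · exact hbc hac
  rcases eq_or_ne b c with rfl | hbc'
  · exact hab hac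
  have hba := (h.total hab').resolve_left hab
  have hcb := (h.total hbc').resolve_left hbc
  exact h.2.2 a (.head hac (.head hcb (.single hba)))

theorem antisymm_compl (h : IsAcyclicTournament W) : Std.Antisymm fun a b : X => (a, b) ∉ W :=
  ⟨fun _ _ hab hba => by_contra fun hne => (h.total hne).elim hab hba⟩

end IsAcyclicTournament

end Tournaments

theorem monomial_algebra_polygrowth_iff_tournament_general {X : Type*} [Fintype X]
    (n : ℕ) (hcard : Fintype.card X = n) (W : Set (X × X)) :
    (W.ncard = n.choose 2 ∧ (∀ x : X, (x, x) ∉ W) ∧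
      ∃ C : ℕ, 0 < C ∧ ∃ d : ℕ, ∀ m : ℕ,
        {l : List X | l.length = m ∧ IsNormalWord W l}.ncard ≤ C * (m + 1) ^ d) ↔
    IsAcyclicTournament W := by
  subst hcard
  constructor
  · rintro ⟨hchoose, hloop, C, -, d, hbound⟩
    have hstall := exists_apply_eq_apply_succ_of_ncard_isChain_le (R := fun a b => (a, b) ∉ W)
      hloop hbound
    have htot : ∀ x y : X, x ≠ y → (x, y) ∈ W ∨ (y, x) ∈ W := fun x y hxy => by
      have := not_and_of_forall_exists_apply_eq_apply_succ (R := fun a b => (a, b) ∉ W) hstall hxy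
      tauto
    have hasymm := (ncard_eq_choose_two_iff hloop htot).mp hchoose
    exact ⟨hloop, fun x y hxy => (xor_iff_or_and_not_and _ _).mpr
      ⟨htot x y hxy, fun h => hasymm x y h.1 h.2⟩, not_transGen_self hloop hasymm hstall⟩
  · intro h
    have := h.isTrans_compl
    have := h.antisymm_compl
    refine ⟨(ncard_eq_choose_two_iff h.1 fun _ _ => h.total).mpr fun _ _ => h.asymm, h.1,
      1, one_pos, Fintype.card X, fun m => ?_⟩
    exact (ncard_isChain_le m).trans_eq (one_mul _).symm

/-- For an alphabet X of n ≥ 1 letters and a set W of words of length 2, the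
following are equivalent: (a) |W| = C(n,2), W contains no square xx, and the
number of normal words of length m grows at most polynomially in m;
(b) the graph Γ_W is an acyclic tournament. -/
theorem monomial_algebra_polygrowth_iff_tournament {X : Type*} [Fintype X]
    (n : ℕ) (hn : 1 ≤ n) (hcard : Fintype.card X = n) (W : Set (X × X)) :
    (W.ncard = n.choose 2 ∧ (∀ x : X, (x, x) ∉ W) ∧
      ∃ C : ℕ, 0 < C ∧ ∃ d : ℕ, ∀ m : ℕ,
        {l : List X | l.length = m ∧ IsNormalWord W l}.ncard ≤ C * (m + 1) ^ d) ↔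
    IsAcyclicTournament W :=
  monomial_algebra_polygrowth_iff_tournament_general n hcard W
end
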